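/- arXiv:2512.21986 — 3 statements merged into one kernel-verified Lean document; each statement's English description precedes it below -/
import Mathlib

section
/- The Time-integrated Optimal Transport function D_p is a metric on P_p(ℝ^{d+1}): for all α, β, ξ ∈ P_p(ℝ^{d+1}), D_p(α,β) = D_p(β,α); D_p(α,β) = 0 if and only if α = β; and D_p(α,ξ) ≤ D_p(α,β) + D_p(β,ξ). -/
open MeasureTheory Filter Topology

noncomputable section

/-- The space `ℝ^{d+1} = ℝ^d × ℝ`, with last coordinate representing time. -/
abbrev Zsp (d : ℕ) : Type := (Fin d → ℝ) × ℝ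

/-- The pseudometric `d_{p,w}((x,t),(y,s)) = (w‖x−y‖_p^p + (1−w)|t−s|^p)^{1/p}`. -/
def dpw {d : ℕ} (p w : ℝ) (z z' : Zsp d) : ℝ :=
  (w * (∑ i, |z.1 i - z'.1 i| ^ p) + (1 - w) * |z.2 - z'.2| ^ p) ^ (1 / p)

/-- The metric `d_p((x,t),(y,s)) = (‖x−y‖_p^p + |t−s|^p)^{1/p}`. -/
def dPmet {d : ℕ} (p : ℝ) (z z' : Zsp d) : ℝ :=
  ((∑ i, |z.1 i - z'.1 i| ^ p) + |z.2 - z'.2| ^ p) ^ (1 / p)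

/-- `μ ∈ P_p(ℝ^{d+1})`: a Borel probability measure with finite `p`-th moment w.r.t. `d_p`. -/
def MemPp {d : ℕ} (p : ℝ) (μ : Measure (Zsp d)) : Prop :=
  IsProbabilityMeasure μ ∧ ∀ z0 : Zsp d, Integrable (fun z => dPmet p z0 z ^ p) μ

/-- `π ∈ Π(α,β)`: a coupling of `α` and `β`. -/
def IsCoupling {d : ℕ} (π : Measure (Zsp d × Zsp d)) (α β : Measure (Zsp d)) : Prop :=
  IsProbabilityMeasure π ∧ π.map Prod.fst = α ∧ π.map Prod.snd = β

/-- `W_{p,w}(α,β) = (inf_{π ∈ Π(α,β)} ∫ d_{p,w}(z,z')^p dπ)^{1/p}`. -/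
def Wpw {d : ℕ} (p w : ℝ) (α β : Measure (Zsp d)) : ℝ :=
  sInf {r : ℝ | ∃ π : Measure (Zsp d × Zsp d), IsCoupling π α β ∧
    r = ∫ z, dpw p w z.1 z.2 ^ p ∂π} ^ (1 / p)

/-- `W_p(α,β)`: the `p`-Wasserstein distance w.r.t. `d_p`. -/
def Wp {d : ℕ} (p : ℝ) (α β : Measure (Zsp d)) : ℝ :=
  sInf {r : ℝ | ∃ π : Measure (Zsp d × Zsp d), IsCoupling π α β ∧
    r = ∫ z, dPmet p z.1 z.2 ^ p ∂π} ^ (1 / p)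

/-- The Time-integrated Optimal Transport distance `D_p(α,β) = sup_{w ∈ [0,1]} W_{p,w}(α,β)`. -/
def Dp {d : ℕ} (p : ℝ) (α β : Measure (Zsp d)) : ℝ :=
  sSup {r : ℝ | ∃ w ∈ Set.Icc (0 : ℝ) 1, r = Wpw p w α β}

/-- Weak convergence in `P_p(ℝ^{d+1})`. -/
def WeakConvPp {d : ℕ} (p : ℝ) (μs : ℕ → Measure (Zsp d)) (μ : Measure (Zsp d)) : Prop :=
  (∀ φ : BoundedContinuousFunction (Zsp d) ℝ,
      Tendsto (fun k => ∫ z, φ z ∂(μs k)) atTop (𝓝 (∫ z, φ z ∂μ))) ∧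
  (∀ z0 : Zsp d,
      Tendsto (fun k => ∫ z, dPmet p z0 z ^ p ∂(μs k)) atTop
        (𝓝 (∫ z, dPmet p z0 z ^ p ∂μ)))

namespace DpAux

open ProbabilityTheory Set Metric

variable {d : ℕ} {p w : ℝ}

/-- The `p`-th power of `dpw` as a linear expression. -/
def costw (p w : ℝ) {d : ℕ} (z z' : Zsp d) : ℝ :=
  w * (∑ i, |z.1 i - z'.1 i| ^ p) + (1 - w) * |z.2 - z'.2| ^ p

/-- The `p`-th power of `dPmet`. -/
def bigB (p : ℝ) {d : ℕ} (z z' : Zsp d) : ℝ :=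
  (∑ i, |z.1 i - z'.1 i| ^ p) + |z.2 - z'.2| ^ p

lemma sum_nonneg' (p : ℝ) (z z' : Zsp d) : 0 ≤ ∑ i, |z.1 i - z'.1 i| ^ p :=
  Finset.sum_nonneg fun _ _ => Real.rpow_nonneg (abs_nonneg _) _

lemma abs_rpow_nonneg (x : ℝ) : 0 ≤ |x| ^ p := Real.rpow_nonneg (abs_nonneg _) _

lemma bigB_nonneg (p : ℝ) (z z' : Zsp d) : 0 ≤ bigB p z z' :=
  add_nonneg (sum_nonneg' p z z') (abs_rpow_nonneg _)

lemma costw_nonneg (hw0 : 0 ≤ w) (hw1 : w ≤ 1) (z z' : Zsp d) : 0 ≤ costw p w z z' :=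
  add_nonneg (mul_nonneg hw0 (sum_nonneg' p z z'))
    (mul_nonneg (by linarith) (abs_rpow_nonneg _))

lemma costw_le_bigB (hw0 : 0 ≤ w) (hw1 : w ≤ 1) (z z' : Zsp d) :
    costw p w z z' ≤ bigB p z z' := by
  have h1 := sum_nonneg' p z z'
  have h2 := abs_rpow_nonneg (p := p) (z.2 - z'.2)
  have := mul_le_of_le_one_left h1 hw1
  have := mul_le_of_le_one_left h2 (by linarith : 1 - w ≤ 1)
  unfold costw bigB
  nlinarith

lemma costw_symm (z z' : Zsp d) : costw p w z z' = costw p w z' z := by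
  unfold costw
  simp [abs_sub_comm]

lemma rpow_one_div_rpow (hp : 0 < p) {c : ℝ} (hc : 0 ≤ c) : (c ^ (1/p)) ^ p = c := by
  rw [← Real.rpow_mul hc, one_div, inv_mul_cancel₀ hp.ne', Real.rpow_one]

lemma dpw_eq (z z' : Zsp d) : dpw p w z z' = costw p w z z' ^ (1/p) := rfl

lemma dPmet_eq (z z' : Zsp d) : dPmet p z z' = bigB p z z' ^ (1/p) := rfl

lemma dpw_pow_eq (hp : 0 < p) (hw0 : 0 ≤ w) (hw1 : w ≤ 1) (z z' : Zsp d) :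
    dpw p w z z' ^ p = costw p w z z' := by
  rw [dpw_eq, rpow_one_div_rpow hp (costw_nonneg hw0 hw1 z z')]

lemma dPmet_pow_eq (hp : 0 < p) (z z' : Zsp d) : dPmet p z z' ^ p = bigB p z z' := by
  rw [dPmet_eq, rpow_one_div_rpow hp (bigB_nonneg p z z')]

lemma dpw_nonneg (hw0 : 0 ≤ w) (hw1 : w ≤ 1) (z z' : Zsp d) : 0 ≤ dpw p w z z' :=
  Real.rpow_nonneg (costw_nonneg hw0 hw1 z z') _


section Cont
variable (hp : 0 ≤ p)
include hp

lemma continuous_abs_rpow : Continuous (fun x : ℝ => |x| ^ p) :=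
  (Real.continuous_rpow_const hp).comp continuous_abs

lemma continuous_costw : Continuous (fun q : Zsp d × Zsp d => costw p w q.1 q.2) := by
  unfold costw
  apply Continuous.add
  · exact continuous_const.mul (continuous_finset_sum _ fun i _ =>
      (continuous_abs_rpow hp).comp
        (((continuous_apply i).comp (continuous_fst.fst)).sub
          ((continuous_apply i).comp (continuous_snd.fst))))
  · exact continuous_const.mul ((continuous_abs_rpow hp).comp
      ((continuous_fst.snd).sub (continuous_snd.snd)))

lemma continuous_bigB : Continuous (fun q : Zsp d × Zsp d => bigB p q.1 q.2) := by
  unfold bigB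
  apply Continuous.add
  · exact continuous_finset_sum _ fun i _ =>
      (continuous_abs_rpow hp).comp
        (((continuous_apply i).comp (continuous_fst.fst)).sub
          ((continuous_apply i).comp (continuous_snd.fst)))
  · exact (continuous_abs_rpow hp).comp ((continuous_fst.snd).sub (continuous_snd.snd))

lemma continuous_dpw : Continuous (fun q : Zsp d × Zsp d => dpw p w q.1 q.2) := by
  simp only [dpw_eq]
  exact (Real.continuous_rpow_const (by positivity)).comp (continuous_costw hp)

end Cont

lemma rpow_add_le (hp : 0 ≤ p) {x y : ℝ} (hx : 0 ≤ x) (hy : 0 ≤ y) :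
    (x + y) ^ p ≤ 2 ^ p * (x ^ p + y ^ p) := by
  have h1 : x + y ≤ 2 * max x y := by
    rcases le_total x y with h | h
    · have := le_max_right x y; linarith [max_eq_right h]
    · have := le_max_left x y; linarith [max_eq_left h]
  calc (x + y) ^ p ≤ (2 * max x y) ^ p :=
        Real.rpow_le_rpow (by linarith) h1 hp
    _ = 2 ^ p * (max x y) ^ p := Real.mul_rpow (by norm_num) (le_max_of_le_left hx)
    _ ≤ 2 ^ p * (x ^ p + y ^ p) := by
        have hxp : (0:ℝ) ≤ x ^ p := Real.rpow_nonneg hx _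
        have hyp : (0:ℝ) ≤ y ^ p := Real.rpow_nonneg hy _
        have : (max x y) ^ p ≤ x ^ p + y ^ p := by
          rcases max_cases x y with ⟨h, _⟩ | ⟨h, _⟩ <;> rw [h] <;> linarith
        have h2 : (0:ℝ) ≤ 2 ^ p := Real.rpow_nonneg (by norm_num) _
        nlinarith

lemma bigB_le (hp : 0 ≤ p) (z0 z z' : Zsp d) :
    bigB p z z' ≤ 2 ^ p * (bigB p z0 z + bigB p z0 z') := by
  have hterm : ∀ a b c : ℝ, |a - b| ^ p ≤ 2 ^ p * (|c - a| ^ p + |c - b| ^ p) := by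
    intro a b c
    have habs : |a - b| ≤ |c - a| + |c - b| := by
      have := abs_sub_le a c b
      rwa [abs_sub_comm a c] at this
    calc |a - b| ^ p ≤ (|c - a| + |c - b|) ^ p :=
          Real.rpow_le_rpow (abs_nonneg _) habs hp
      _ ≤ 2 ^ p * (|c - a| ^ p + |c - b| ^ p) :=
          rpow_add_le hp (abs_nonneg _) (abs_nonneg _)
  have h1 : (∑ i, |z.1 i - z'.1 i| ^ p) ≤
      ∑ i, 2 ^ p * (|z0.1 i - z.1 i| ^ p + |z0.1 i - z'.1 i| ^ p) :=
    Finset.sum_le_sum fun i _ => hterm _ _ _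
  have h2 := hterm z.2 z'.2 z0.2
  unfold bigB
  calc (∑ i, |z.1 i - z'.1 i| ^ p) + |z.2 - z'.2| ^ p
      ≤ (∑ i, 2 ^ p * (|z0.1 i - z.1 i| ^ p + |z0.1 i - z'.1 i| ^ p)) +
        2 ^ p * (|z0.2 - z.2| ^ p + |z0.2 - z'.2| ^ p) := add_le_add h1 h2
    _ = 2 ^ p * (((∑ i, |z0.1 i - z.1 i| ^ p) + |z0.2 - z.2| ^ p) +
        ((∑ i, |z0.1 i - z'.1 i| ^ p) + |z0.2 - z'.2| ^ p)) := by
        simp only [mul_add, Finset.sum_add_distrib, Finset.mul_sum]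
        ring

lemma dist_le_bigB (hp : 0 ≤ p) {δ : ℝ} (hδ : 0 < δ) {z z' : Zsp d}
    (h : δ ≤ dist z z') : δ ^ p ≤ bigB p z z' := by
  have hmax : δ ≤ max (dist z.1 z'.1) (dist z.2 z'.2) := by
    rwa [← Prod.dist_eq]
  have key : ∃ r : ℝ, δ ≤ |r| ∧ |r| ^ p ≤ bigB p z z' := by
    rcases le_max_iff.mp hmax with h1 | h2
    · by_contra hc
      push_neg at hc
      have : dist z.1 z'.1 < δ := by
        rw [dist_pi_lt_iff hδ]
        intro i
        rcases lt_or_ge (dist (z.1 i) (z'.1 i)) δ with h' | h'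
        · exact h'
        · exact absurd ((Finset.single_le_sum (fun j _ => abs_rpow_nonneg _)
              (Finset.mem_univ i)).trans (le_add_of_nonneg_right (abs_rpow_nonneg _)))
            (not_le.mpr (hc (z.1 i - z'.1 i) (by rwa [← Real.dist_eq])))
      linarith
    · refine ⟨z.2 - z'.2, by rwa [← Real.dist_eq], ?_⟩
      exact le_add_of_nonneg_left (sum_nonneg' p z z')
  obtain ⟨r, hr1, hr2⟩ := key
  exact (Real.rpow_le_rpow hδ.le hr1 hp).trans hr2


/-- Representation of `dpw` as an unweighted `ℓ^p` sum over `Fin d ⊕ Unit`. -/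
lemma dpw_sum_repr (hp : 0 < p) (hw0 : 0 ≤ w) (hw1 : w ≤ 1) (u v : Zsp d) :
    dpw p w u v = (∑ j : Fin d ⊕ Unit,
      |Sum.elim (fun i => w ^ (1/p) * (u.1 i - v.1 i))
        (fun _ => (1-w) ^ (1/p) * (u.2 - v.2)) j| ^ p) ^ (1/p) := by
  have ha : (0:ℝ) ≤ w ^ (1/p) := Real.rpow_nonneg hw0 _
  have hb : (0:ℝ) ≤ (1-w) ^ (1/p) := Real.rpow_nonneg (by linarith) _
  have hap : (w ^ (1/p)) ^ p = w := rpow_one_div_rpow hp hw0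
  have hbp : ((1-w) ^ (1/p)) ^ p = 1 - w := rpow_one_div_rpow hp (by linarith)
  have key : ∀ (a x : ℝ), 0 ≤ a → |a * x| ^ p = a ^ p * |x| ^ p := fun a x ha' => by
    rw [abs_mul, abs_of_nonneg ha', Real.mul_rpow ha' (abs_nonneg _)]
  rw [dpw_eq]
  congr 1
  rw [Fintype.sum_sum_type]
  simp only [Sum.elim_inl, Sum.elim_inr, key _ _ ha, key _ _ hb, hap, hbp]
  unfold costw
  rw [← Finset.mul_sum]
  simp

/-- Triangle inequality for `dpw`. -/
lemma dpw_triangle (hp : 1 ≤ p) (hw0 : 0 ≤ w) (hw1 : w ≤ 1) (x y z : Zsp d) :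
    dpw p w x z ≤ dpw p w x y + dpw p w y z := by
  have hp0 : 0 < p := lt_of_lt_of_le one_pos hp
  rw [dpw_sum_repr hp0 hw0 hw1 x z, dpw_sum_repr hp0 hw0 hw1 x y,
    dpw_sum_repr hp0 hw0 hw1 y z]
  set f : Fin d ⊕ Unit → ℝ := Sum.elim (fun i => w ^ (1/p) * (x.1 i - y.1 i))
    (fun _ => (1-w) ^ (1/p) * (x.2 - y.2)) with hf
  set g : Fin d ⊕ Unit → ℝ := Sum.elim (fun i => w ^ (1/p) * (y.1 i - z.1 i))
    (fun _ => (1-w) ^ (1/p) * (y.2 - z.2)) with hg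
  have hfg : (Sum.elim (fun i => w ^ (1/p) * (x.1 i - z.1 i))
      (fun _ => (1-w) ^ (1/p) * (x.2 - z.2)) : Fin d ⊕ Unit → ℝ) = fun j => f j + g j := by
    funext j
    cases j with
    | inl i => simp [hf, hg]; ring
    | inr _ => simp [hf, hg]; ring
  rw [hfg]
  exact Real.Lp_add_le Finset.univ f g hp


section Sets

variable {α β : Measure (Zsp d)}

/-- The set of transport costs (already in linear form). -/
def Wset (p w : ℝ) {d : ℕ} (α β : Measure (Zsp d)) : Set ℝ :=
  {r : ℝ | ∃ π : Measure (Zsp d × Zsp d), IsCoupling π α β ∧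
    r = ∫ z, costw p w z.1 z.2 ∂π}

lemma Wpw_eq_sInf (hp : 0 < p) (hw0 : 0 ≤ w) (hw1 : w ≤ 1) :
    Wpw p w α β = sInf (Wset p w α β) ^ (1/p) := by
  unfold Wpw Wset
  congr 2
  ext r
  constructor <;> rintro ⟨π, h1, rfl⟩ <;> refine ⟨π, h1, ?_⟩ <;>
    simp only [dpw_pow_eq hp hw0 hw1]

lemma prod_isCoupling (hα : IsProbabilityMeasure α) (hβ : IsProbabilityMeasure β) :
    IsCoupling (α.prod β) α β := by
  refine ⟨by infer_instance, ?_, ?_⟩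
  · rw [Measure.map_fst_prod]; simp
  · rw [Measure.map_snd_prod]; simp

lemma Wset_nonempty (hα : IsProbabilityMeasure α) (hβ : IsProbabilityMeasure β) :
    (Wset p w α β).Nonempty :=
  ⟨_, α.prod β, prod_isCoupling hα hβ, rfl⟩

lemma Wset_nonneg (hw0 : 0 ≤ w) (hw1 : w ≤ 1) {r : ℝ} (hr : r ∈ Wset p w α β) : 0 ≤ r := by
  obtain ⟨π, _, rfl⟩ := hr
  exact integral_nonneg fun z => costw_nonneg hw0 hw1 _ _

lemma Wset_bddBelow (hw0 : 0 ≤ w) (hw1 : w ≤ 1) : BddBelow (Wset p w α β) :=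
  ⟨0, fun _ hr => Wset_nonneg hw0 hw1 hr⟩

lemma sInf_Wset_nonneg (hw0 : 0 ≤ w) (hw1 : w ≤ 1)
    (hα : IsProbabilityMeasure α) (hβ : IsProbabilityMeasure β) :
    0 ≤ sInf (Wset p w α β) :=
  le_csInf (Wset_nonempty hα hβ) fun _ hr => Wset_nonneg hw0 hw1 hr

lemma Wpw_nonneg (hp : 0 < p) (hw0 : 0 ≤ w) (hw1 : w ≤ 1)
    (hα : IsProbabilityMeasure α) (hβ : IsProbabilityMeasure β) :
    0 ≤ Wpw p w α β := by
  rw [Wpw_eq_sInf hp hw0 hw1]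
  exact Real.rpow_nonneg (sInf_Wset_nonneg hw0 hw1 hα hβ) _

set_option maxHeartbeats 2000000 in
/-- Integrability of `bigB (z0, ·)` composed with `fst` under any coupling. -/
lemma integrable_bigB_fst (hp : 0 < p) (hα : MemPp p α) {π : Measure (Zsp d × Zsp d)}
    (hπ : IsCoupling π α β) (z0 : Zsp d) :
    Integrable (fun q : Zsp d × Zsp d => bigB p z0 q.1) π := by
  have h1 : Integrable (fun z => bigB p z0 z) α := by
    have := hα.2 z0
    simpa only [dPmet_pow_eq hp] using this
  rw [← hπ.2.1] at h1
  have hcont : Continuous (fun z : Zsp d => bigB p z0 z) :=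
    (continuous_bigB hp.le).comp (continuous_const.prodMk continuous_id)
  exact (integrable_map_measure hcont.aestronglyMeasurable
    measurable_fst.aemeasurable).mp h1

set_option maxHeartbeats 2000000 in
lemma integrable_bigB_snd (hp : 0 < p) (hβ : MemPp p β) {π : Measure (Zsp d × Zsp d)}
    (hπ : IsCoupling π α β) (z0 : Zsp d) :
    Integrable (fun q : Zsp d × Zsp d => bigB p z0 q.2) π := by
  have h1 : Integrable (fun z => bigB p z0 z) β := by
    have := hβ.2 z0
    simpa only [dPmet_pow_eq hp] using this
  rw [← hπ.2.2] at h1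
  have hcont : Continuous (fun z : Zsp d => bigB p z0 z) :=
    (continuous_bigB hp.le).comp (continuous_const.prodMk continuous_id)
  exact (integrable_map_measure hcont.aestronglyMeasurable
    measurable_snd.aemeasurable).mp h1

lemma integrable_costw (hp : 0 < p) (hw0 : 0 ≤ w) (hw1 : w ≤ 1)
    (hα : MemPp p α) (hβ : MemPp p β) {π : Measure (Zsp d × Zsp d)}
    (hπ : IsCoupling π α β) :
    Integrable (fun q : Zsp d × Zsp d => costw p w q.1 q.2) π := by
  set z0 : Zsp d := (0, 0)
  have hb : Integrable
      (fun q : Zsp d × Zsp d => 2 ^ p * (bigB p z0 q.1 + bigB p z0 q.2)) π :=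
    ((integrable_bigB_fst hp hα hπ z0).add (integrable_bigB_snd hp hβ hπ z0)).const_mul _
  refine hb.mono' ((continuous_costw hp.le).aestronglyMeasurable) ?_
  filter_upwards with q
  rw [Real.norm_eq_abs, abs_of_nonneg (costw_nonneg hw0 hw1 _ _)]
  exact (costw_le_bigB hw0 hw1 _ _).trans (bigB_le hp.le z0 _ _)

lemma integrable_bigB' (hp : 0 < p) (hα : MemPp p α) (hβ : MemPp p β)
    {π : Measure (Zsp d × Zsp d)} (hπ : IsCoupling π α β) :
    Integrable (fun q : Zsp d × Zsp d => bigB p q.1 q.2) π := by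
  have h1 := integrable_costw (w := 1) hp zero_le_one le_rfl hα hβ hπ
  have h0 := integrable_costw (w := 0) hp le_rfl zero_le_one hα hβ hπ
  have := h1.add h0
  refine this.congr ?_
  filter_upwards with q
  simp only [Pi.add_apply]
  unfold costw bigB
  ring


/-- The map `π ↦ π.map Prod.swap` sends couplings of `(α,β)` to couplings of `(β,α)`. -/
lemma isCoupling_swap {π : Measure (Zsp d × Zsp d)} (hπ : IsCoupling π α β) :
    IsCoupling (π.map Prod.swap) β α := by
  have h := hπ.1
  refine ⟨Measure.isProbabilityMeasure_map measurable_swap.aemeasurable, ?_, ?_⟩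
  · rw [Measure.map_map measurable_fst measurable_swap]
    exact hπ.2.2
  · rw [Measure.map_map measurable_snd measurable_swap]
    exact hπ.2.1

lemma Wset_symm (hp : 0 < p) : Wset p w α β = Wset p w β α := by
  have key : ∀ (γ δ : Measure (Zsp d)), Wset p w γ δ ⊆ Wset p w δ γ := by
    rintro γ δ r ⟨π, hπ, rfl⟩
    have h := hπ.1
    refine ⟨π.map Prod.swap, isCoupling_swap hπ, ?_⟩
    rw [integral_map measurable_swap.aemeasurable
      ((continuous_costw hp.le).aestronglyMeasurable)]
    exact integral_congr_ae (Filter.Eventually.of_forall fun q => by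
      simp only [Prod.swap, Function.comp]
      exact (costw_symm _ _).symm) |>.symm
  exact le_antisymm (key α β) (key β α)

lemma Wpw_symm (hp : 0 < p) (hw0 : 0 ≤ w) (hw1 : w ≤ 1) :
    Wpw p w α β = Wpw p w β α := by
  rw [Wpw_eq_sInf hp hw0 hw1, Wpw_eq_sInf hp hw0 hw1, Wset_symm hp]

lemma Dp_symm (hp : 0 < p) : Dp p α β = Dp p β α := by
  unfold Dp
  congr 1
  ext r
  constructor <;> rintro ⟨w', hw', rfl⟩ <;>
    exact ⟨w', hw', (Wpw_symm hp hw'.1 hw'.2)⟩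

/-- Uniform upper bound for `Wpw` over `w ∈ [0,1]`. -/
lemma Wpw_le_bound (hp : 0 < p) (hw0 : 0 ≤ w) (hw1 : w ≤ 1)
    (hα : MemPp p α) (hβ : MemPp p β) :
    Wpw p w α β ≤ (∫ q, bigB p q.1 q.2 ∂(α.prod β)) ^ (1/p) := by
  have hc := prod_isCoupling hα.1 hβ.1
  have hmem : (∫ q, costw p w q.1 q.2 ∂(α.prod β)) ∈ Wset p w α β := ⟨_, hc, rfl⟩
  have hle : (∫ q, costw p w q.1 q.2 ∂(α.prod β)) ≤ ∫ q, bigB p q.1 q.2 ∂(α.prod β) :=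
    integral_mono (integrable_costw hp hw0 hw1 hα hβ hc) (integrable_bigB' hp hα hβ hc)
      fun q => costw_le_bigB hw0 hw1 _ _
  rw [Wpw_eq_sInf hp hw0 hw1]
  exact Real.rpow_le_rpow (sInf_Wset_nonneg hw0 hw1 hα.1 hβ.1)
    ((csInf_le (Wset_bddBelow hw0 hw1) hmem).trans hle) (by positivity)

lemma Dp_bddAbove (hp : 0 < p) (hα : MemPp p α) (hβ : MemPp p β) :
    BddAbove {r : ℝ | ∃ w ∈ Set.Icc (0 : ℝ) 1, r = Wpw p w α β} := by
  refine ⟨(∫ q, bigB p q.1 q.2 ∂(α.prod β)) ^ (1/p), ?_⟩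
  rintro r ⟨w', hw', rfl⟩
  exact Wpw_le_bound hp hw'.1 hw'.2 hα hβ

lemma Dp_set_nonempty : {r : ℝ | ∃ w ∈ Set.Icc (0 : ℝ) 1, r = Wpw (d := d) p w α β}.Nonempty :=
  ⟨Wpw p 0 α β, 0, ⟨le_refl 0, zero_le_one⟩, rfl⟩

lemma Wpw_le_Dp (hp : 0 < p) (hw0 : 0 ≤ w) (hw1 : w ≤ 1)
    (hα : MemPp p α) (hβ : MemPp p β) :
    Wpw p w α β ≤ Dp p α β :=
  le_csSup (Dp_bddAbove hp hα hβ) ⟨w, ⟨hw0, hw1⟩, rfl⟩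

lemma Dp_nonneg (hp : 0 < p) (hα : MemPp p α) (hβ : MemPp p β) : 0 ≤ Dp p α β :=
  le_trans (Wpw_nonneg (w := 0) hp le_rfl zero_le_one hα.1 hβ.1)
    (Wpw_le_Dp hp le_rfl zero_le_one hα hβ)

/-- The diagonal coupling shows `Wpw p w α α = 0`. -/
lemma Wpw_self (hp : 0 < p) (hw0 : 0 ≤ w) (hw1 : w ≤ 1) (hα : IsProbabilityMeasure α) :
    Wpw p w α α = 0 := by
  have hm : Measurable (fun z : Zsp d => (z, z)) := measurable_id.prodMk measurable_id
  have hdiag : IsCoupling (α.map (fun z => (z, z))) α α := by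
    have hid : (Prod.fst ∘ fun z : Zsp d => (z, z)) = id := rfl
    have hid2 : (Prod.snd ∘ fun z : Zsp d => (z, z)) = id := rfl
    refine ⟨Measure.isProbabilityMeasure_map hm.aemeasurable, ?_, ?_⟩
    · rw [Measure.map_map measurable_fst hm, hid, Measure.map_id]
    · rw [Measure.map_map measurable_snd hm, hid2, Measure.map_id]
  have hmem : (0:ℝ) ∈ Wset p w α α := by
    refine ⟨_, hdiag, ?_⟩
    rw [integral_map hm.aemeasurable ((continuous_costw hp.le).aestronglyMeasurable)]
    have h0 : (fun z : Zsp d => costw p w ((z, z) : Zsp d × Zsp d).1 ((z, z) : Zsp d × Zsp d).2)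
        = fun _ => (0:ℝ) := by
      funext z
      unfold costw
      simp [Real.zero_rpow hp.ne']
    rw [h0]
    simp
  rw [Wpw_eq_sInf hp hw0 hw1]
  have h0 : sInf (Wset p w α α) = 0 :=
    le_antisymm (csInf_le (Wset_bddBelow hw0 hw1) hmem)
      (sInf_Wset_nonneg hw0 hw1 hα hα)
  rw [h0]
  exact Real.zero_rpow (by positivity)


/-- If couplings with arbitrarily small `bigB`-cost exist, then `α F ≤ β F` on closed sets. -/
lemma measure_closed_le (hp : 0 < p) (hα : MemPp p α) (hβ : MemPp p β)
    (h0 : ∀ ε > (0:ℝ), ∃ π : Measure (Zsp d × Zsp d), IsCoupling π α β ∧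
      ∫ q, bigB p q.1 q.2 ∂π < ε)
    {F : Set (Zsp d)} (hF : IsClosed F) : α F ≤ β F := by
  haveI := hα.1
  haveI := hβ.1
  have main : ∀ δ > (0:ℝ), (α F).toReal ≤ (β (thickening δ F)).toReal := by
    intro δ hδ
    refine le_of_forall_pos_le_add fun ε hε => ?_
    obtain ⟨π, hπ, hcost⟩ := h0 (ε * δ ^ p) (by positivity)
    haveI := hπ.1
    set T := thickening δ F with hT
    set bad : Set (Zsp d × Zsp d) := {q | δ ^ p ≤ bigB p q.1 q.2} with hbad
    have hsub : Prod.fst ⁻¹' F ⊆ (Prod.snd ⁻¹' T) ∪ bad := by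
      rintro q (hq : q.1 ∈ F)
      by_cases hq2 : q.2 ∈ T
      · exact Or.inl hq2
      · refine Or.inr ?_
        have hdist : δ ≤ dist q.2 q.1 := by
          by_contra hlt
          exact hq2 (mem_thickening_iff.mpr ⟨q.1, hq, not_le.mp hlt⟩)
        rw [dist_comm] at hdist
        exact dist_le_bigB hp.le (by positivity) hdist
    have hαF : α F = π (Prod.fst ⁻¹' F) := by
      rw [← hπ.2.1, Measure.map_apply measurable_fst hF.measurableSet]
    have hβT : π (Prod.snd ⁻¹' T) = β T := by
      rw [← hπ.2.2, Measure.map_apply measurable_snd isOpen_thickening.measurableSet]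
    have hmeas_le : α F ≤ β T + π bad := by
      rw [hαF, ← hβT]
      exact (measure_mono hsub).trans (measure_union_le _ _)
    have hint : Integrable (fun q : Zsp d × Zsp d => bigB p q.1 q.2) π :=
      integrable_bigB' hp hα hβ hπ
    have hmarkov : δ ^ p * (π bad).toReal ≤ ∫ q, bigB p q.1 q.2 ∂π := by
      have h := mul_meas_ge_le_integral_of_nonneg (μ := π)
        (f := fun q : Zsp d × Zsp d => bigB p q.1 q.2)
        (Filter.Eventually.of_forall fun q => bigB_nonneg p q.1 q.2) hint (δ ^ p)
      rwa [← hbad] at h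
    have hδp : (0:ℝ) < δ ^ p := Real.rpow_pos_of_pos hδ _
    have hbadval : (π bad).toReal ≤ ε := by
      have h2 : δ ^ p * (π bad).toReal ≤ ε * δ ^ p := hmarkov.trans hcost.le
      calc (π bad).toReal = δ ^ p * (π bad).toReal / δ ^ p := by field_simp
        _ ≤ ε * δ ^ p / δ ^ p := by gcongr
        _ = ε := by field_simp
    calc (α F).toReal ≤ (β T + π bad).toReal :=
          ENNReal.toReal_mono
            (ENNReal.add_ne_top.mpr ⟨measure_ne_top _ _, measure_ne_top _ _⟩) hmeas_le
      _ = (β T).toReal + (π bad).toReal :=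
          ENNReal.toReal_add (measure_ne_top _ _) (measure_ne_top _ _)
      _ ≤ (β T).toReal + ε := by linarith
  -- pass to the limit δ → 0⁺
  have hβlim : Tendsto (fun δ => β (thickening δ F)) (𝓝[>] 0) (𝓝 (β F)) :=
    tendsto_measure_thickening_of_isClosed ⟨1, one_pos, measure_ne_top _ _⟩ hF
  have hβlim' : Tendsto (fun δ => (β (thickening δ F)).toReal) (𝓝[>] 0)
      (𝓝 ((β F).toReal)) := (ENNReal.tendsto_toReal (measure_ne_top _ _)).comp hβlim
  have hle : (α F).toReal ≤ (β F).toReal := by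
    refine ge_of_tendsto hβlim' ?_
    filter_upwards [self_mem_nhdsWithin] with δ hδ
    exact main δ hδ
  exact (ENNReal.toReal_le_toReal (measure_ne_top _ _) (measure_ne_top _ _)).mp hle


lemma bigB_symm (z z' : Zsp d) : bigB p z z' = bigB p z' z := by
  unfold bigB
  simp [abs_sub_comm]

lemma eq_of_closed (hα : IsProbabilityMeasure α) (hβ : IsProbabilityMeasure β)
    (h : ∀ F : Set (Zsp d), IsClosed F → α F = β F) : α = β := by
  apply ext_of_generate_finite {s : Set (Zsp d) | IsClosed s} ?_ isPiSystem_isClosed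
    (fun F hF => h F hF) (by rw [measure_univ, measure_univ])
  rw [BorelSpace.measurable_eq (α := Zsp d), borel_eq_generateFrom_isClosed]

lemma eq_of_Dp_zero (hp : 1 ≤ p) (hα : MemPp p α) (hβ : MemPp p β)
    (h : Dp p α β = 0) : α = β := by
  have hp0 : 0 < p := lt_of_lt_of_le one_pos hp
  have hw0 : (0:ℝ) ≤ 1/2 := by norm_num
  have hw1 : (1:ℝ)/2 ≤ 1 := by norm_num
  have hhalf : Wpw p (1/2) α β = 0 :=
    le_antisymm (h ▸ Wpw_le_Dp hp0 hw0 hw1 hα hβ)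
      (Wpw_nonneg hp0 hw0 hw1 hα.1 hβ.1)
  have hsinf : sInf (Wset p (1/2) α β) = 0 := by
    rw [Wpw_eq_sInf hp0 hw0 hw1] at hhalf
    exact (Real.rpow_eq_zero (sInf_Wset_nonneg hw0 hw1 hα.1 hβ.1)
      (by positivity)).mp hhalf
  have hsmall : ∀ ε > (0:ℝ), ∃ π : Measure (Zsp d × Zsp d), IsCoupling π α β ∧
      ∫ q, bigB p q.1 q.2 ∂π < ε := by
    intro ε hε
    have hlt : sInf (Wset p (1/2) α β) < ε / 2 := by rw [hsinf]; positivity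
    obtain ⟨r, hrmem, hrlt⟩ := (csInf_lt_iff (Wset_bddBelow hw0 hw1)
      (Wset_nonempty hα.1 hβ.1)).mp hlt
    obtain ⟨π, hπ, rfl⟩ := hrmem
    refine ⟨π, hπ, ?_⟩
    have heq : ∫ q, bigB p q.1 q.2 ∂π = 2 * ∫ q, costw p (1/2) q.1 q.2 ∂π := by
      rw [← integral_const_mul]
      refine integral_congr_ae (Filter.Eventually.of_forall fun q => ?_)
      unfold bigB costw
      ring
    rw [heq]
    linarith
  have hsmall' : ∀ ε > (0:ℝ), ∃ π : Measure (Zsp d × Zsp d), IsCoupling π β α ∧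
      ∫ q, bigB p q.1 q.2 ∂π < ε := by
    intro ε hε
    obtain ⟨π, hπ, hc⟩ := hsmall ε hε
    refine ⟨π.map Prod.swap, isCoupling_swap hπ, ?_⟩
    rw [integral_map measurable_swap.aemeasurable
      (continuous_bigB hp0.le).aestronglyMeasurable]
    have heq : ∀ q : Zsp d × Zsp d, bigB p (Prod.swap q).1 (Prod.swap q).2
        = bigB p q.1 q.2 := fun q => bigB_symm _ _
    calc ∫ q, bigB p (Prod.swap q).1 (Prod.swap q).2 ∂π
        = ∫ q, bigB p q.1 q.2 ∂π :=
          integral_congr_ae (Filter.Eventually.of_forall heq)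
      _ < ε := hc
  refine eq_of_closed hα.1 hβ.1 fun F hF => le_antisymm
    (measure_closed_le hp0 hα hβ hsmall hF)
    (measure_closed_le hp0 hβ hα hsmall' hF)


/-- Integral Minkowski-type triangle step. -/
lemma lp_triangle {X : Type*} [MeasurableSpace X] (μ : Measure X) (hp : 1 ≤ p)
    {F G H : X → ℝ} (hF0 : ∀ x, 0 ≤ F x) (hG0 : ∀ x, 0 ≤ G x) (hH0 : ∀ x, 0 ≤ H x)
    (hle : ∀ x, H x ≤ F x + G x)
    (hFm : AEStronglyMeasurable F μ) (hGm : AEStronglyMeasurable G μ)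
    (hFi : Integrable (fun x => F x ^ p) μ) (hGi : Integrable (fun x => G x ^ p) μ)
    (hHi : Integrable (fun x => H x ^ p) μ) :
    (∫ x, H x ^ p ∂μ) ^ (1/p) ≤
      (∫ x, F x ^ p ∂μ) ^ (1/p) + (∫ x, G x ^ p ∂μ) ^ (1/p) := by
  have hp0 : 0 < p := lt_of_lt_of_le one_pos hp
  have hkey : ∀ (J : X → ℝ), (∀ x, 0 ≤ J x) → Integrable (fun x => J x ^ p) μ →
      (∫⁻ x, ENNReal.ofReal (J x) ^ p ∂μ) = ENNReal.ofReal (∫ x, J x ^ p ∂μ) := by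
    intro J hJ hJi
    calc ∫⁻ x, ENNReal.ofReal (J x) ^ p ∂μ
        = ∫⁻ x, ENNReal.ofReal (J x ^ p) ∂μ :=
          lintegral_congr fun x => ENNReal.ofReal_rpow_of_nonneg (hJ x) hp0.le
      _ = ENNReal.ofReal (∫ x, J x ^ p ∂μ) :=
          (ofReal_integral_eq_lintegral_ofReal hJi
            (Filter.Eventually.of_forall fun x => Real.rpow_nonneg (hJ x) p)).symm
  have h1 : ∫⁻ x, ENNReal.ofReal (H x) ^ p ∂μ ≤
      ∫⁻ x, ((fun x => ENNReal.ofReal (F x)) + fun x => ENNReal.ofReal (G x)) x ^ p ∂μ := by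
    refine lintegral_mono fun x => ?_
    refine ENNReal.rpow_le_rpow ?_ hp0.le
    simp only [Pi.add_apply]
    rw [← ENNReal.ofReal_add (hF0 x) (hG0 x)]
    exact ENNReal.ofReal_le_ofReal (hle x)
  have h2 := ENNReal.lintegral_Lp_add_le (μ := μ)
    hFm.aemeasurable.ennreal_ofReal hGm.aemeasurable.ennreal_ofReal hp
  have h3 : (∫⁻ x, ENNReal.ofReal (H x) ^ p ∂μ) ^ (1/p) ≤
      (∫⁻ x, ENNReal.ofReal (F x) ^ p ∂μ) ^ (1/p) +
      (∫⁻ x, ENNReal.ofReal (G x) ^ p ∂μ) ^ (1/p) :=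
    le_trans (ENNReal.rpow_le_rpow h1 (by positivity)) h2
  rw [hkey H hH0 hHi, hkey F hF0 hFi, hkey G hG0 hGi] at h3
  have hHnn : 0 ≤ ∫ x, H x ^ p ∂μ := integral_nonneg fun x => Real.rpow_nonneg (hH0 x) p
  have hFnn : 0 ≤ ∫ x, F x ^ p ∂μ := integral_nonneg fun x => Real.rpow_nonneg (hF0 x) p
  have hGnn : 0 ≤ ∫ x, G x ^ p ∂μ := integral_nonneg fun x => Real.rpow_nonneg (hG0 x) p
  rw [ENNReal.ofReal_rpow_of_nonneg (p := 1/p) hHnn (by positivity),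
    ENNReal.ofReal_rpow_of_nonneg (p := 1/p) hFnn (by positivity),
    ENNReal.ofReal_rpow_of_nonneg (p := 1/p) hGnn (by positivity),
    ← ENNReal.ofReal_add (by positivity) (by positivity)] at h3
  exact (ENNReal.ofReal_le_ofReal_iff (by positivity)).mp h3


section Glue

lemma map_compProd_prod_fst (β' : Measure (Zsp d)) [IsProbabilityMeasure β']
    (K₁ K₂ : Kernel (Zsp d) (Zsp d)) [IsMarkovKernel K₁] [IsMarkovKernel K₂] :
    (β' ⊗ₘ (K₁ ×ₖ K₂)).map (fun q : Zsp d × (Zsp d × Zsp d) => (q.1, q.2.1))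
      = β' ⊗ₘ K₁ := by
  have hm : Measurable (fun q : Zsp d × (Zsp d × Zsp d) => (q.1, q.2.1)) :=
    measurable_fst.prodMk (measurable_fst.comp measurable_snd)
  ext s hs
  rw [Measure.map_apply hm hs, Measure.compProd_apply (hm hs), Measure.compProd_apply hs]
  refine lintegral_congr fun y => ?_
  rw [Kernel.prod_apply]
  have hset : (Prod.mk y ⁻¹' ((fun q : Zsp d × (Zsp d × Zsp d) => (q.1, q.2.1)) ⁻¹' s))
      = (Prod.mk y ⁻¹' s) ×ˢ (Set.univ : Set (Zsp d)) := by
    ext c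
    simp [Set.mem_prod]
  rw [hset, Measure.prod_prod, measure_univ, mul_one]

lemma map_compProd_prod_snd (β' : Measure (Zsp d)) [IsProbabilityMeasure β']
    (K₁ K₂ : Kernel (Zsp d) (Zsp d)) [IsMarkovKernel K₁] [IsMarkovKernel K₂] :
    (β' ⊗ₘ (K₁ ×ₖ K₂)).map (fun q : Zsp d × (Zsp d × Zsp d) => (q.1, q.2.2))
      = β' ⊗ₘ K₂ := by
  have hm : Measurable (fun q : Zsp d × (Zsp d × Zsp d) => (q.1, q.2.2)) :=
    measurable_fst.prodMk (measurable_snd.comp measurable_snd)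
  ext s hs
  rw [Measure.map_apply hm hs, Measure.compProd_apply (hm hs), Measure.compProd_apply hs]
  refine lintegral_congr fun y => ?_
  rw [Kernel.prod_apply]
  have hset : (Prod.mk y ⁻¹' ((fun q : Zsp d × (Zsp d × Zsp d) => (q.1, q.2.2)) ⁻¹' s))
      = (Set.univ : Set (Zsp d)) ×ˢ (Prod.mk y ⁻¹' s) := by
    ext c
    simp [Set.mem_prod]
  rw [hset, Measure.prod_prod, measure_univ, one_mul]


set_option maxHeartbeats 1000000 in
lemma glue_triangle (hp : 1 ≤ p) (hw0 : 0 ≤ w) (hw1 : w ≤ 1)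
    (hα : MemPp p α) (hβ : MemPp p β) {ξ : Measure (Zsp d)} (hξ : MemPp p ξ)
    {π₁ π₂ : Measure (Zsp d × Zsp d)}
    (h1 : IsCoupling π₁ α β) (h2 : IsCoupling π₂ β ξ) :
    ∃ r ∈ Wset p w α ξ, r ^ (1/p) ≤ (∫ q, costw p w q.1 q.2 ∂π₁) ^ (1/p)
      + (∫ q, costw p w q.1 q.2 ∂π₂) ^ (1/p) := by
  have hp0 : 0 < p := lt_of_lt_of_le one_pos hp
  haveI := h1.1
  haveI := h2.1
  haveI := hα.1
  haveI := hβ.1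
  haveI := hξ.1
  set ρ₁ : Measure (Zsp d × Zsp d) := π₁.map Prod.swap with hρ₁def
  haveI : IsProbabilityMeasure ρ₁ :=
    Measure.isProbabilityMeasure_map measurable_swap.aemeasurable
  have hρ₁fst : ρ₁.fst = β := by
    show ρ₁.map Prod.fst = β
    rw [hρ₁def, Measure.map_map measurable_fst measurable_swap]
    exact h1.2.2
  have hπ₂fst : π₂.fst = β := h2.2.1
  set K₁ := ρ₁.condKernel with hK₁
  set K₂ := π₂.condKernel with hK₂
  have hd1 : β ⊗ₘ K₁ = ρ₁ := by rw [← hρ₁fst]; exact ρ₁.disintegrate K₁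
  have hd2 : β ⊗ₘ K₂ = π₂ := by rw [← hπ₂fst]; exact π₂.disintegrate K₂
  set μ : Measure (Zsp d × (Zsp d × Zsp d)) := β ⊗ₘ (K₁ ×ₖ K₂) with hμdef
  haveI : IsProbabilityMeasure μ := by rw [hμdef]; infer_instance
  have hm1 : Measurable (fun q : Zsp d × (Zsp d × Zsp d) => (q.1, q.2.1)) :=
    measurable_fst.prodMk (measurable_fst.comp measurable_snd)
  have hm2 : Measurable (fun q : Zsp d × (Zsp d × Zsp d) => (q.1, q.2.2)) :=
    measurable_fst.prodMk (measurable_snd.comp measurable_snd)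
  have hmap1 : μ.map (fun q : Zsp d × (Zsp d × Zsp d) => (q.1, q.2.1)) = ρ₁ := by
    rw [hμdef, map_compProd_prod_fst, hd1]
  have hmap2 : μ.map (fun q : Zsp d × (Zsp d × Zsp d) => (q.1, q.2.2)) = π₂ := by
    rw [hμdef, map_compProd_prod_snd, hd2]
  set π : Measure (Zsp d × Zsp d) := μ.map (fun q : Zsp d × (Zsp d × Zsp d) => q.2)
    with hπdef
  have hcoup : IsCoupling π α ξ := by
    refine ⟨Measure.isProbabilityMeasure_map measurable_snd.aemeasurable, ?_, ?_⟩
    · rw [hπdef, Measure.map_map measurable_fst measurable_snd]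
      have hcomp : (Prod.fst ∘ fun q : Zsp d × (Zsp d × Zsp d) => q.2)
          = (Prod.snd ∘ fun q : Zsp d × (Zsp d × Zsp d) => (q.1, q.2.1)) := rfl
      rw [hcomp, ← Measure.map_map measurable_snd hm1, hmap1, hρ₁def,
        Measure.map_map measurable_snd measurable_swap]
      exact h1.2.1
    · rw [hπdef, Measure.map_map measurable_snd measurable_snd]
      have hcomp : (Prod.snd ∘ fun q : Zsp d × (Zsp d × Zsp d) => q.2)
          = (Prod.snd ∘ fun q : Zsp d × (Zsp d × Zsp d) => (q.1, q.2.2)) := rfl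
      rw [hcomp, ← Measure.map_map measurable_snd hm2, hmap2]
      exact h2.2.2
  refine ⟨∫ q, costw p w q.1 q.2 ∂π, ⟨π, hcoup, rfl⟩, ?_⟩
  have hcont : Continuous (fun q : Zsp d × Zsp d => costw p w q.1 q.2) :=
    continuous_costw hp0.le
  have hcont' : Continuous (fun q : Zsp d × Zsp d => costw p w q.2 q.1) :=
    hcont.comp continuous_swap
  -- integral identities
  have hIH : ∫ q, costw p w q.1 q.2 ∂π = ∫ q, costw p w q.2.1 q.2.2 ∂μ := by
    rw [hπdef, integral_map measurable_snd.aemeasurable hcont.aestronglyMeasurable]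
  have hIF : ∫ q, costw p w q.1 q.2 ∂π₁ = ∫ q, costw p w q.2.1 q.1 ∂μ := by
    have e1 : ∫ q, costw p w q.2 q.1 ∂(μ.map (fun q : Zsp d × (Zsp d × Zsp d) =>
        (q.1, q.2.1))) = ∫ q, costw p w q.2.1 q.1 ∂μ :=
      integral_map hm1.aemeasurable hcont'.aestronglyMeasurable
    have e2 : ∫ q, costw p w q.2 q.1 ∂ρ₁ = ∫ q, costw p w q.1 q.2 ∂π₁ := by
      rw [hρ₁def, integral_map measurable_swap.aemeasurable hcont'.aestronglyMeasurable]
      rfl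
    rw [← e2, ← e1, hmap1]
  have hIG : ∫ q, costw p w q.1 q.2 ∂π₂ = ∫ q, costw p w q.1 q.2.2 ∂μ := by
    have e1 : ∫ q, costw p w q.1 q.2 ∂(μ.map (fun q : Zsp d × (Zsp d × Zsp d) =>
        (q.1, q.2.2))) = ∫ q, costw p w q.1 q.2.2 ∂μ :=
      integral_map hm2.aemeasurable hcont.aestronglyMeasurable
    rw [← e1, hmap2]
  -- integrability over μ
  have hintπ : Integrable (fun q : Zsp d × Zsp d => costw p w q.1 q.2) π :=
    integrable_costw hp0 hw0 hw1 hα hξ hcoup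
  have hintH : Integrable (fun q : Zsp d × (Zsp d × Zsp d) =>
      costw p w q.2.1 q.2.2) μ := by
    rw [hπdef] at hintπ
    exact (integrable_map_measure hcont.aestronglyMeasurable
      measurable_snd.aemeasurable).mp hintπ
  have hintF : Integrable (fun q : Zsp d × (Zsp d × Zsp d) =>
      costw p w q.2.1 q.1) μ := by
    have i1 : Integrable (fun q : Zsp d × Zsp d => costw p w q.1 q.2) π₁ :=
      integrable_costw hp0 hw0 hw1 hα hβ h1
    have i2 : Integrable (fun q : Zsp d × Zsp d => costw p w q.2 q.1) ρ₁ := by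
      rw [hρ₁def]
      exact (integrable_map_measure hcont'.aestronglyMeasurable
        measurable_swap.aemeasurable).mpr i1
    rw [← hmap1] at i2
    exact (integrable_map_measure hcont'.aestronglyMeasurable
      hm1.aemeasurable).mp i2
  have hintG : Integrable (fun q : Zsp d × (Zsp d × Zsp d) =>
      costw p w q.1 q.2.2) μ := by
    have i1 : Integrable (fun q : Zsp d × Zsp d => costw p w q.1 q.2) π₂ :=
      integrable_costw hp0 hw0 hw1 hβ hξ h2
    rw [← hmap2] at i1
    exact (integrable_map_measure hcont.aestronglyMeasurable
      hm2.aemeasurable).mp i1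
  -- Minkowski
  have hdpwpow : ∀ (u v : Zsp d), dpw p w u v ^ p = costw p w u v :=
    dpw_pow_eq hp0 hw0 hw1
  have htri := lp_triangle (p := p) μ hp
    (F := fun q : Zsp d × (Zsp d × Zsp d) => dpw p w q.2.1 q.1)
    (G := fun q : Zsp d × (Zsp d × Zsp d) => dpw p w q.1 q.2.2)
    (H := fun q : Zsp d × (Zsp d × Zsp d) => dpw p w q.2.1 q.2.2)
    (fun q => dpw_nonneg hw0 hw1 _ _) (fun q => dpw_nonneg hw0 hw1 _ _)
    (fun q => dpw_nonneg hw0 hw1 _ _)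
    (fun q => dpw_triangle hp hw0 hw1 q.2.1 q.1 q.2.2)
    (((continuous_dpw hp0.le).comp ((continuous_fst.comp continuous_snd).prodMk
      continuous_fst)).aestronglyMeasurable)
    (((continuous_dpw hp0.le).comp (continuous_fst.prodMk
      (continuous_snd.comp continuous_snd))).aestronglyMeasurable)
    (by simpa only [hdpwpow] using hintF)
    (by simpa only [hdpwpow] using hintG)
    (by simpa only [hdpwpow] using hintH)
  simp only [hdpwpow] at htri
  rw [hIH, hIF, hIG]
  exact htri

end Glue

end Sets


section Triangle

variable {α β ξ : Measure (Zsp d)}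

lemma Wpw_triangle (hp : 1 ≤ p) (hw0 : 0 ≤ w) (hw1 : w ≤ 1)
    (hα : MemPp p α) (hβ : MemPp p β) (hξ : MemPp p ξ) :
    Wpw p w α ξ ≤ Wpw p w α β + Wpw p w β ξ := by
  have hp0 : 0 < p := lt_of_lt_of_le one_pos hp
  rw [Wpw_eq_sInf hp0 hw0 hw1, Wpw_eq_sInf hp0 hw0 hw1, Wpw_eq_sInf hp0 hw0 hw1]
  set A := sInf (Wset p w α ξ) with hA
  set B := sInf (Wset p w α β) with hB
  set C := sInf (Wset p w β ξ) with hC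
  have hA0 : 0 ≤ A := sInf_Wset_nonneg hw0 hw1 hα.1 hξ.1
  have hB0 : 0 ≤ B := sInf_Wset_nonneg hw0 hw1 hα.1 hβ.1
  have hC0 : 0 ≤ C := sInf_Wset_nonneg hw0 hw1 hβ.1 hξ.1
  have key : ∀ ε > (0:ℝ), A ^ (1/p) ≤ (B + ε) ^ (1/p) + (C + ε) ^ (1/p) := by
    intro ε hε
    obtain ⟨b, hbmem, hblt⟩ := (csInf_lt_iff (Wset_bddBelow hw0 hw1)
      (Wset_nonempty hα.1 hβ.1)).mp (show B < B + ε by linarith)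
    obtain ⟨c, hcmem, hclt⟩ := (csInf_lt_iff (Wset_bddBelow hw0 hw1)
      (Wset_nonempty hβ.1 hξ.1)).mp (show C < C + ε by linarith)
    have hb0 : 0 ≤ b := Wset_nonneg hw0 hw1 hbmem
    have hc0 : 0 ≤ c := Wset_nonneg hw0 hw1 hcmem
    obtain ⟨π₁, hπ₁, rfl⟩ := hbmem
    obtain ⟨π₂, hπ₂, rfl⟩ := hcmem
    obtain ⟨r, hrmem, hrle⟩ := glue_triangle hp hw0 hw1 hα hβ hξ hπ₁ hπ₂
    have hAr : A ≤ r := csInf_le (Wset_bddBelow hw0 hw1) hrmem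
    refine (Real.rpow_le_rpow hA0 hAr (by positivity)).trans (hrle.trans ?_)
    exact add_le_add (Real.rpow_le_rpow hb0 hblt.le (by positivity))
      (Real.rpow_le_rpow hc0 hclt.le (by positivity))
  have ht : Tendsto (fun ε : ℝ => (B + ε) ^ (1/p) + (C + ε) ^ (1/p)) (𝓝[>] 0)
      (𝓝 (B ^ (1/p) + C ^ (1/p))) := by
    have h1 : ContinuousAt (fun ε : ℝ => (B + ε) ^ (1/p)) 0 := by
      have hc : ContinuousAt (fun ε : ℝ => B + ε) 0 := continuousAt_const.add continuousAt_id
      have hr : ContinuousAt (fun x : ℝ => x ^ (1/p)) ((fun ε : ℝ => B + ε) 0) :=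
        Real.continuousAt_rpow_const _ _ (Or.inr (by positivity))
      exact hr.comp hc
    have h2 : ContinuousAt (fun ε : ℝ => (C + ε) ^ (1/p)) 0 := by
      have hc : ContinuousAt (fun ε : ℝ => C + ε) 0 := continuousAt_const.add continuousAt_id
      have hr : ContinuousAt (fun x : ℝ => x ^ (1/p)) ((fun ε : ℝ => C + ε) 0) :=
        Real.continuousAt_rpow_const _ _ (Or.inr (by positivity))
      exact hr.comp hc
    have := (h1.add h2).tendsto
    rw [show B ^ (1/p) + C ^ (1/p) = (B + 0) ^ (1/p) + (C + 0) ^ (1/p) by simp only [add_zero]]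
    exact this.mono_left nhdsWithin_le_nhds
  refine ge_of_tendsto ht ?_
  filter_upwards [self_mem_nhdsWithin] with ε hε
  exact key ε hε

lemma Dp_triangle (hp : 1 ≤ p) (hα : MemPp p α) (hβ : MemPp p β) (hξ : MemPp p ξ) :
    Dp p α ξ ≤ Dp p α β + Dp p β ξ := by
  have hp0 : 0 < p := lt_of_lt_of_le one_pos hp
  refine csSup_le Dp_set_nonempty ?_
  rintro r ⟨w', hw', rfl⟩
  calc Wpw p w' α ξ ≤ Wpw p w' α β + Wpw p w' β ξ :=
        Wpw_triangle hp hw'.1 hw'.2 hα hβ hξ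
    _ ≤ Dp p α β + Dp p β ξ :=
        add_le_add (Wpw_le_Dp hp0 hw'.1 hw'.2 hα hβ) (Wpw_le_Dp hp0 hw'.1 hw'.2 hβ hξ)

lemma Dp_self (hp : 0 < p) (hα : MemPp p α) : Dp p α α = 0 := by
  refine le_antisymm (csSup_le Dp_set_nonempty ?_) (Dp_nonneg hp hα hα)
  rintro r ⟨w', hw', rfl⟩
  exact le_of_eq (Wpw_self hp hw'.1 hw'.2 hα.1)

end Triangle

end DpAux


/-- `D_p` is a metric on `P_p(ℝ^{d+1})`: it is symmetric, vanishes exactly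
on the diagonal, and satisfies the triangle inequality. -/
theorem Dp_isMetric {d : ℕ} (hd : 1 ≤ d) (p : ℝ) (hp : 1 ≤ p)
    (α β ξ : Measure (Zsp d)) (hα : MemPp p α) (hβ : MemPp p β) (hξ : MemPp p ξ) :
    Dp p α β = Dp p β α ∧ (Dp p α β = 0 ↔ α = β) ∧
      Dp p α ξ ≤ Dp p α β + Dp p β ξ := by
  have hp0 : 0 < p := lt_of_lt_of_le one_pos hp
  exact ⟨DpAux.Dp_symm hp0, ⟨fun h => DpAux.eq_of_Dp_zero hp hα hβ h,
    fun h => by rw [h]; exact DpAux.Dp_self hp0 hβ⟩, DpAux.Dp_triangle hp hα hβ hξ⟩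
end
end

section
/- For every p ∈ [1,∞) and all α, β ∈ P_p(ℝ^{d+1}), one has (1/2)^{1/p} · W_p(α,β) ≤ D_p(α,β) ≤ W_p(α,β). -/
open MeasureTheory Filter Topology

noncomputable section

open Pointwise

section auxDpBounds

lemma dPmet_rpow {d : ℕ} {p : ℝ} (hp : 0 < p) (z z' : Zsp d) :
    dPmet p z z' ^ p = (∑ i, |z.1 i - z'.1 i| ^ p) + |z.2 - z'.2| ^ p := by
  have hb : (0:ℝ) ≤ (∑ i, |z.1 i - z'.1 i| ^ p) + |z.2 - z'.2| ^ p := by positivity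
  rw [dPmet, ← Real.rpow_mul hb, one_div_mul_cancel hp.ne', Real.rpow_one]

lemma dpw_rpow {d : ℕ} {p w : ℝ} (hp : 0 < p) (hw0 : 0 ≤ w) (hw1 : w ≤ 1) (z z' : Zsp d) :
    dpw p w z z' ^ p = w * (∑ i, |z.1 i - z'.1 i| ^ p) + (1 - w) * |z.2 - z'.2| ^ p := by
  have h1 : (0:ℝ) ≤ ∑ i, |z.1 i - z'.1 i| ^ p := by positivity
  have h2 : (0:ℝ) ≤ |z.2 - z'.2| ^ p := by positivity
  have hb : (0:ℝ) ≤ w * (∑ i, |z.1 i - z'.1 i| ^ p) + (1 - w) * |z.2 - z'.2| ^ p := by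
    have := mul_nonneg hw0 h1
    have := mul_nonneg (by linarith : (0:ℝ) ≤ 1 - w) h2
    linarith
  rw [dpw, ← Real.rpow_mul hb, one_div_mul_cancel hp.ne', Real.rpow_one]

lemma dPmet_nonneg {d : ℕ} {p : ℝ} (z z' : Zsp d) : 0 ≤ dPmet p z z' := by
  rw [dPmet]; positivity

lemma dpw_nonneg {d : ℕ} {p w : ℝ} (hw0 : 0 ≤ w) (hw1 : w ≤ 1) (z z' : Zsp d) :
    0 ≤ dpw p w z z' := by
  rw [dpw]
  have h1 : (0:ℝ) ≤ ∑ i, |z.1 i - z'.1 i| ^ p := by positivity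
  have h2 : (0:ℝ) ≤ |z.2 - z'.2| ^ p := by positivity
  have hb : (0:ℝ) ≤ w * (∑ i, |z.1 i - z'.1 i| ^ p) + (1 - w) * |z.2 - z'.2| ^ p := by
    have := mul_nonneg hw0 h1
    have := mul_nonneg (by linarith : (0:ℝ) ≤ 1 - w) h2
    linarith
  exact Real.rpow_nonneg hb _

lemma contA {d : ℕ} {p : ℝ} (hp : 0 < p) :
    Continuous (fun z : Zsp d × Zsp d => ∑ i, |z.1.1 i - z.2.1 i| ^ p) := by
  apply continuous_finset_sum
  intro i _
  exact (((continuous_apply i).comp (continuous_fst.comp continuous_fst)).sub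
    ((continuous_apply i).comp (continuous_fst.comp continuous_snd))).abs.rpow_const
    fun z => Or.inr hp.le

lemma contB {d : ℕ} {p : ℝ} (hp : 0 < p) :
    Continuous (fun z : Zsp d × Zsp d => |z.1.2 - z.2.2| ^ p) :=
  (((continuous_snd.comp continuous_fst)).sub
    ((continuous_snd.comp continuous_snd))).abs.rpow_const fun z => Or.inr hp.le

lemma cont_dPmet_pow {d : ℕ} {p : ℝ} (hp : 0 < p) :
    Continuous (fun z : Zsp d × Zsp d => dPmet p z.1 z.2 ^ p) := by
  have heq : (fun z : Zsp d × Zsp d => dPmet p z.1 z.2 ^ p)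
      = fun z => (∑ i, |z.1.1 i - z.2.1 i| ^ p) + |z.1.2 - z.2.2| ^ p :=
    funext fun z => dPmet_rpow hp _ _
  rw [heq]; exact (contA hp).add (contB hp)

lemma cont_dpw_pow {d : ℕ} {p w : ℝ} (hp : 0 < p) (hw0 : 0 ≤ w) (hw1 : w ≤ 1) :
    Continuous (fun z : Zsp d × Zsp d => dpw p w z.1 z.2 ^ p) := by
  have heq : (fun z : Zsp d × Zsp d => dpw p w z.1 z.2 ^ p)
      = fun z => w * (∑ i, |z.1.1 i - z.2.1 i| ^ p) + (1 - w) * |z.1.2 - z.2.2| ^ p :=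
    funext fun z => dpw_rpow hp hw0 hw1 _ _
  rw [heq]
  exact (continuous_const.mul (contA hp)).add (continuous_const.mul (contB hp))

lemma dpw_pow_le {d : ℕ} {p w : ℝ} (hp : 0 < p) (hw0 : 0 ≤ w) (hw1 : w ≤ 1) (z z' : Zsp d) :
    dpw p w z z' ^ p ≤ dPmet p z z' ^ p := by
  rw [dpw_rpow hp hw0 hw1, dPmet_rpow hp]
  have h1 : (0:ℝ) ≤ ∑ i, |z.1 i - z'.1 i| ^ p := by positivity
  have h2 : (0:ℝ) ≤ |z.2 - z'.2| ^ p := by positivity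
  nlinarith [mul_nonneg hw0 h2, mul_nonneg hw0 h1]

lemma dpw_half_pow {d : ℕ} {p : ℝ} (hp : 0 < p) (z z' : Zsp d) :
    dpw p (1/2) z z' ^ p = (1/2) * dPmet p z z' ^ p := by
  rw [dpw_rpow hp (by norm_num) (by norm_num), dPmet_rpow hp]
  ring

lemma abs_sub_rpow_le {p : ℝ} (hp : 0 < p) (x y : ℝ) :
    |x - y| ^ p ≤ 2 ^ p * (|x| ^ p + |y| ^ p) := by
  have h1 : |x - y| ≤ 2 * max |x| |y| := by
    calc |x - y| ≤ |x| + |y| := abs_sub _ _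
    _ ≤ max |x| |y| + max |x| |y| := add_le_add (le_max_left _ _) (le_max_right _ _)
    _ = 2 * max |x| |y| := by ring
  have h2 : |x - y| ^ p ≤ (2 * max |x| |y|) ^ p :=
    Real.rpow_le_rpow (abs_nonneg _) h1 hp.le
  have h3 : (2 * max |x| |y|) ^ p = 2 ^ p * max |x| |y| ^ p :=
    Real.mul_rpow (by norm_num) (le_max_of_le_left (abs_nonneg x))
  have h4 : max |x| |y| ^ p ≤ |x| ^ p + |y| ^ p := by
    rcases max_cases |x| |y| with ⟨h, _⟩ | ⟨h, _⟩ <;> rw [h]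
    · nlinarith [Real.rpow_nonneg (abs_nonneg y) p]
    · nlinarith [Real.rpow_nonneg (abs_nonneg x) p]
  calc |x - y| ^ p ≤ (2 * max |x| |y|) ^ p := h2
  _ = 2 ^ p * max |x| |y| ^ p := h3
  _ ≤ 2 ^ p * (|x| ^ p + |y| ^ p) :=
    mul_le_mul_of_nonneg_left h4 (Real.rpow_nonneg (by norm_num) p)

lemma dPmet_pair_le {d : ℕ} {p : ℝ} (hp : 0 < p) (z z' : Zsp d) :
    dPmet p z z' ^ p ≤
      2 ^ p * (dPmet p ((fun _ => 0), 0) z ^ p + dPmet p ((fun _ => 0), 0) z' ^ p) := by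
  rw [dPmet_rpow hp, dPmet_rpow hp, dPmet_rpow hp]
  have hsum : ∑ i, |z.1 i - z'.1 i| ^ p ≤ ∑ i, 2 ^ p * (|z.1 i| ^ p + |z'.1 i| ^ p) :=
    Finset.sum_le_sum fun i _ => abs_sub_rpow_le hp _ _
  have ht : |z.2 - z'.2| ^ p ≤ 2 ^ p * (|z.2| ^ p + |z'.2| ^ p) := abs_sub_rpow_le hp _ _
  calc (∑ i, |z.1 i - z'.1 i| ^ p) + |z.2 - z'.2| ^ p
      ≤ (∑ i, 2 ^ p * (|z.1 i| ^ p + |z'.1 i| ^ p)) + 2 ^ p * (|z.2| ^ p + |z'.2| ^ p) :=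
        add_le_add hsum ht
  _ = 2 ^ p * (((∑ i, |(((fun _ => 0), 0) : Zsp d).1 i - z.1 i| ^ p)
        + |(((fun _ => 0), 0) : Zsp d).2 - z.2| ^ p)
        + ((∑ i, |(((fun _ => 0), 0) : Zsp d).1 i - z'.1 i| ^ p)
        + |(((fun _ => 0), 0) : Zsp d).2 - z'.2| ^ p)) := by
      simp only [zero_sub, abs_neg, Finset.mul_sum, mul_add, Finset.sum_add_distrib]
      ring

lemma integrable_dPmet_pow {d : ℕ} {p : ℝ} (hp : 1 ≤ p) {α β : Measure (Zsp d)}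
    (hα : MemPp p α) (hβ : MemPp p β) {π : Measure (Zsp d × Zsp d)}
    (hc : IsCoupling π α β) :
    Integrable (fun z : Zsp d × Zsp d => dPmet p z.1 z.2 ^ p) π := by
  have hp0 : 0 < p := lt_of_lt_of_le one_pos hp
  set z0 : Zsp d := ((fun _ => 0), 0) with hz0
  have hcont0 : Continuous fun z : Zsp d => dPmet p z0 z ^ p := by
    have heq : (fun z : Zsp d => dPmet p z0 z ^ p)
        = fun z => (∑ i, |z0.1 i - z.1 i| ^ p) + |z0.2 - z.2| ^ p :=
      funext fun z => dPmet_rpow hp0 _ _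
    rw [heq]
    refine Continuous.add ?_ ?_
    · apply continuous_finset_sum
      intro i _
      exact (continuous_const.sub ((continuous_apply i).comp continuous_fst)).abs.rpow_const
        fun z => Or.inr hp0.le
    · exact (continuous_const.sub continuous_snd).abs.rpow_const fun z => Or.inr hp0.le
  have hfst : Integrable (fun z : Zsp d × Zsp d => dPmet p z0 z.1 ^ p) π := by
    have h1 := hα.2 z0
    rw [← hc.2.1] at h1
    exact (integrable_map_measure hcont0.aestronglyMeasurable
      measurable_fst.aemeasurable).mp h1
  have hsnd : Integrable (fun z : Zsp d × Zsp d => dPmet p z0 z.2 ^ p) π := by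
    have h1 := hβ.2 z0
    rw [← hc.2.2] at h1
    exact (integrable_map_measure hcont0.aestronglyMeasurable
      measurable_snd.aemeasurable).mp h1
  refine Integrable.mono' ((hfst.add hsnd).const_mul (2 ^ p))
    (cont_dPmet_pow hp0).aestronglyMeasurable ?_
  filter_upwards with z
  rw [Real.norm_eq_abs, abs_of_nonneg (Real.rpow_nonneg (dPmet_nonneg _ _) p)]
  exact dPmet_pair_le hp0 z.1 z.2

end auxDpBounds

/-- `(1/2)^{1/p} · W_p(α,β) ≤ D_p(α,β) ≤ W_p(α,β)`. -/
theorem Dp_bounds {d : ℕ} (hd : 1 ≤ d) (p : ℝ) (hp : 1 ≤ p)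
    (α β : Measure (Zsp d)) (hα : MemPp p α) (hβ : MemPp p β) :
    ((1 : ℝ) / 2) ^ (1 / p) * Wp p α β ≤ Dp p α β ∧ Dp p α β ≤ Wp p α β := by
  have hp0 : 0 < p := lt_of_lt_of_le one_pos hp
  haveI := hα.1
  haveI := hβ.1
  set S : Set ℝ := {r : ℝ | ∃ π : Measure (Zsp d × Zsp d), IsCoupling π α β ∧
    r = ∫ z, dPmet p z.1 z.2 ^ p ∂π} with hSdef
  have hc0 : IsCoupling (α.prod β) α β := by
    refine ⟨inferInstance, ?_, ?_⟩
    · rw [Measure.map_fst_prod]; simp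
    · rw [Measure.map_snd_prod]; simp
  have hSne : S.Nonempty := ⟨_, α.prod β, hc0, rfl⟩
  have hSnn : ∀ r ∈ S, (0:ℝ) ≤ r := by
    rintro r ⟨π, hc, rfl⟩
    exact integral_nonneg fun z => Real.rpow_nonneg (dPmet_nonneg _ _) p
  have hInf_nn : 0 ≤ sInf S := Real.sInf_nonneg hSnn
  have hWp_nn : 0 ≤ Wp p α β := Real.rpow_nonneg hInf_nn _
  -- each Wpw is at most Wp
  have hW : ∀ w, 0 ≤ w → w ≤ 1 → Wpw p w α β ≤ Wp p α β := by
    intro w hw0 hw1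
    set Sw : Set ℝ := {r : ℝ | ∃ π : Measure (Zsp d × Zsp d), IsCoupling π α β ∧
      r = ∫ z, dpw p w z.1 z.2 ^ p ∂π} with hSwdef
    have hSwbdd : BddBelow Sw := by
      refine ⟨0, ?_⟩
      rintro r ⟨π, hc, rfl⟩
      exact integral_nonneg fun z => Real.rpow_nonneg (dpw_nonneg hw0 hw1 _ _) p
    have hle : sInf Sw ≤ sInf S := by
      apply le_csInf hSne
      rintro r ⟨π, hc, rfl⟩
      have hint : Integrable (fun z : Zsp d × Zsp d => dPmet p z.1 z.2 ^ p) π :=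
        integrable_dPmet_pow hp hα hβ hc
      have hintw : Integrable (fun z : Zsp d × Zsp d => dpw p w z.1 z.2 ^ p) π := by
        refine hint.mono' (cont_dpw_pow hp0 hw0 hw1).aestronglyMeasurable ?_
        filter_upwards with z
        rw [Real.norm_eq_abs, abs_of_nonneg (Real.rpow_nonneg (dpw_nonneg hw0 hw1 _ _) p)]
        exact dpw_pow_le hp0 hw0 hw1 z.1 z.2
      refine le_trans (csInf_le hSwbdd ⟨π, hc, rfl⟩) ?_
      exact integral_mono hintw hint fun z => dpw_pow_le hp0 hw0 hw1 z.1 z.2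
    exact Real.rpow_le_rpow (Real.sInf_nonneg fun r hr => by
      obtain ⟨π, hc, rfl⟩ := hr
      exact integral_nonneg fun z => Real.rpow_nonneg (dpw_nonneg hw0 hw1 _ _) p) hle (by positivity)
  have hDle : Dp p α β ≤ Wp p α β := by
    apply Real.sSup_le _ hWp_nn
    rintro r ⟨w, ⟨hw0, hw1⟩, rfl⟩
    exact hW w hw0 hw1
  refine ⟨?_, hDle⟩
  -- lower bound via w = 1/2
  have hhalf : Wpw p (1/2) α β = ((1:ℝ)/2) ^ (1/p) * Wp p α β := by
    have hset : {r : ℝ | ∃ π : Measure (Zsp d × Zsp d), IsCoupling π α β ∧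
        r = ∫ z, dpw p (1/2) z.1 z.2 ^ p ∂π} = ((1:ℝ)/2) • S := by
      ext r
      simp only [Set.mem_smul_set, hSdef, Set.mem_setOf_eq, smul_eq_mul]
      constructor
      · rintro ⟨π, hc, rfl⟩
        refine ⟨∫ z, dPmet p z.1 z.2 ^ p ∂π, ⟨π, hc, rfl⟩, ?_⟩
        rw [← integral_const_mul]
        exact integral_congr_ae (Filter.Eventually.of_forall fun z =>
          (dpw_half_pow hp0 z.1 z.2).symm)
      · rintro ⟨x, ⟨π, hc, rfl⟩, rfl⟩
        refine ⟨π, hc, ?_⟩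
        rw [← integral_const_mul]
        exact integral_congr_ae (Filter.Eventually.of_forall fun z =>
          (dpw_half_pow hp0 z.1 z.2).symm)
    rw [Wpw, hset, Real.sInf_smul_of_nonneg (by norm_num), smul_eq_mul,
      Real.mul_rpow (by norm_num) hInf_nn, Wp]
  have hmem : Wpw p (1/2) α β ∈ {r : ℝ | ∃ w ∈ Set.Icc (0:ℝ) 1, r = Wpw p w α β} :=
    ⟨1/2, ⟨by norm_num, by norm_num⟩, rfl⟩
  have hbdd : BddAbove {r : ℝ | ∃ w ∈ Set.Icc (0:ℝ) 1, r = Wpw p w α β} := by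
    refine ⟨Wp p α β, ?_⟩
    rintro r ⟨w, ⟨hw0, hw1⟩, rfl⟩
    exact hW w hw0 hw1
  calc ((1:ℝ)/2) ^ (1/p) * Wp p α β = Wpw p (1/2) α β := hhalf.symm
  _ ≤ Dp p α β := le_csSup hbdd hmem
end
end

section
/- Let p ∈ [1,∞). The distance D_p is jointly continuous with respect to weak convergence in P_p(ℝ^{d+1}): if μ_k converges weakly in P_p(ℝ^{d+1}) to μ and ν_k converges weakly in P_p(ℝ^{d+1}) to ν as k → ∞, then D_p(μ_k, ν_k) → D_p(μ, ν). -/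
open MeasureTheory Filter Topology

noncomputable section

open scoped ENNReal NNReal

namespace TOT

variable {d : ℕ} {p w : ℝ}

lemma hp0 (hp : 1 ≤ p) : 0 < p := lt_of_lt_of_le one_pos hp

lemma fact_one_le (hp : 1 ≤ p) : Fact (1 ≤ ENNReal.ofReal p) :=
  ⟨by rwa [ENNReal.one_le_ofReal]⟩

/-- Embedding with coefficients `a` on space and `b` on time. -/
def embG (d : ℕ) (p a b : ℝ) (z : Zsp d) : PiLp (ENNReal.ofReal p) (fun _ : Fin (d+1) => ℝ) :=
  WithLp.toLp _ (Fin.snoc (fun i => a * z.1 i) (b * z.2))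

lemma norm_embG_sub (hp : 1 ≤ p) [Fact (1 ≤ ENNReal.ofReal p)] (a b : ℝ) (z z' : Zsp d) :
    ‖embG d p a b z - embG d p a b z'‖
      = (|a| ^ p * (∑ i, |z.1 i - z'.1 i| ^ p) + |b| ^ p * |z.2 - z'.2| ^ p) ^ (1 / p) := by
  have hptoReal : (ENNReal.ofReal p).toReal = p := ENNReal.toReal_ofReal (hp0 hp).le
  rw [PiLp.norm_eq_sum (by rw [hptoReal]; exact hp0 hp)]
  rw [hptoReal]
  congr 1
  rw [Fin.sum_univ_castSucc]
  have hco : ∀ i : Fin d, (embG d p a b z - embG d p a b z') i.castSucc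
      = a * z.1 i - a * z'.1 i := by
    intro i
    simp [embG, Fin.snoc_castSucc, PiLp.sub_apply]
  have hla : (embG d p a b z - embG d p a b z') (Fin.last d) = b * z.2 - b * z'.2 := by
    simp [embG, Fin.snoc_last, PiLp.sub_apply]
  rw [Finset.mul_sum]
  congr 1
  · apply Finset.sum_congr rfl
    intro i _
    rw [hco i, Real.norm_eq_abs, ← mul_sub, abs_mul,
      Real.mul_rpow (abs_nonneg _) (abs_nonneg _)]
  · rw [hla, Real.norm_eq_abs, ← mul_sub, abs_mul,
      Real.mul_rpow (abs_nonneg _) (abs_nonneg _)]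

lemma dpw_eq_norm (hp : 1 ≤ p) (hw0 : 0 ≤ w) (hw1 : w ≤ 1) [Fact (1 ≤ ENNReal.ofReal p)]
    (z z' : Zsp d) :
    dpw p w z z' = ‖embG d p (w ^ (1/p)) ((1-w) ^ (1/p)) z
      - embG d p (w ^ (1/p)) ((1-w) ^ (1/p)) z'‖ := by
  rw [norm_embG_sub hp]
  have key : ∀ u : ℝ, 0 ≤ u → |u ^ (1/p)| ^ p = u := by
    intro u hu
    rw [abs_of_nonneg (Real.rpow_nonneg hu _), ← Real.rpow_mul hu,
      one_div_mul_cancel (hp0 hp).ne', Real.rpow_one]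
  rw [key w hw0, key (1-w) (by linarith)]
  rfl

lemma dPmet_eq_norm (hp : 1 ≤ p) [Fact (1 ≤ ENNReal.ofReal p)] (z z' : Zsp d) :
    dPmet p z z' = ‖embG d p 1 1 z - embG d p 1 1 z'‖ := by
  rw [norm_embG_sub hp, abs_one, Real.one_rpow, one_mul, one_mul, dPmet]

lemma dpw_symm (z z' : Zsp d) : dpw p w z z' = dpw p w z' z := by
  unfold dpw
  congr 2
  · congr 1
    exact Finset.sum_congr rfl fun i _ => by rw [abs_sub_comm]
  · rw [abs_sub_comm]

lemma dPmet_symm (z z' : Zsp d) : dPmet p z z' = dPmet p z' z := by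
  unfold dPmet
  congr 2
  · exact Finset.sum_congr rfl fun i _ => by rw [abs_sub_comm]
  · rw [abs_sub_comm]

lemma sum_abs_nonneg (z z' : Zsp d) : 0 ≤ ∑ i, |z.1 i - z'.1 i| ^ p :=
  Finset.sum_nonneg fun i _ => Real.rpow_nonneg (abs_nonneg _) _

lemma dpw_base_nonneg (hw0 : 0 ≤ w) (hw1 : w ≤ 1) (z z' : Zsp d) :
    0 ≤ w * (∑ i, |z.1 i - z'.1 i| ^ p) + (1 - w) * |z.2 - z'.2| ^ p := by
  have h1 := sum_abs_nonneg (p := p) z z'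
  have h2 : (0:ℝ) ≤ |z.2 - z'.2| ^ p := Real.rpow_nonneg (abs_nonneg _) _
  nlinarith

lemma dpw_nonneg (hw0 : 0 ≤ w) (hw1 : w ≤ 1) (z z' : Zsp d) : 0 ≤ dpw p w z z' :=
  Real.rpow_nonneg (dpw_base_nonneg hw0 hw1 z z') _

lemma dPmet_nonneg (z z' : Zsp d) : 0 ≤ dPmet p z z' := by
  apply Real.rpow_nonneg
  have h1 := sum_abs_nonneg (p := p) z z'
  have h2 : (0:ℝ) ≤ |z.2 - z'.2| ^ p := Real.rpow_nonneg (abs_nonneg _) _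
  linarith

lemma dpw_rpow_p (hp : 1 ≤ p) (hw0 : 0 ≤ w) (hw1 : w ≤ 1) (z z' : Zsp d) :
    dpw p w z z' ^ p = w * (∑ i, |z.1 i - z'.1 i| ^ p) + (1 - w) * |z.2 - z'.2| ^ p := by
  rw [dpw, ← Real.rpow_mul (dpw_base_nonneg hw0 hw1 z z'),
    one_div_mul_cancel (hp0 hp).ne', Real.rpow_one]

lemma dPmet_rpow_p (hp : 1 ≤ p) (z z' : Zsp d) :
    dPmet p z z' ^ p = (∑ i, |z.1 i - z'.1 i| ^ p) + |z.2 - z'.2| ^ p := by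
  have h1 := sum_abs_nonneg (p := p) z z'
  have h2 : (0:ℝ) ≤ |z.2 - z'.2| ^ p := Real.rpow_nonneg (abs_nonneg _) _
  rw [dPmet, ← Real.rpow_mul (by linarith), one_div_mul_cancel (hp0 hp).ne', Real.rpow_one]

lemma dpw_le_dPmet (hp : 1 ≤ p) (hw0 : 0 ≤ w) (hw1 : w ≤ 1) (z z' : Zsp d) :
    dpw p w z z' ≤ dPmet p z z' := by
  apply Real.rpow_le_rpow (dpw_base_nonneg hw0 hw1 z z')
  · have h1 := sum_abs_nonneg (p := p) z z'
    have h2 : (0:ℝ) ≤ |z.2 - z'.2| ^ p := Real.rpow_nonneg (abs_nonneg _) _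
    nlinarith
  · positivity

lemma dpw_triangle (hp : 1 ≤ p) (hw0 : 0 ≤ w) (hw1 : w ≤ 1) (x y z : Zsp d) :
    dpw p w x z ≤ dpw p w x y + dpw p w y z := by
  haveI := fact_one_le hp
  rw [dpw_eq_norm hp hw0 hw1, dpw_eq_norm hp hw0 hw1, dpw_eq_norm hp hw0 hw1]
  exact norm_sub_le_norm_sub_add_norm_sub _ _ _

lemma dPmet_triangle (hp : 1 ≤ p) (x y z : Zsp d) :
    dPmet p x z ≤ dPmet p x y + dPmet p y z := by
  haveI := fact_one_le hp
  rw [dPmet_eq_norm hp, dPmet_eq_norm hp, dPmet_eq_norm hp]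
  exact norm_sub_le_norm_sub_add_norm_sub _ _ _

/-- `(u+v)^p ≤ 2^p (u^p + v^p)` for nonneg `u v`. -/
lemma add_rpow_le (hp : 1 ≤ p) {u v : ℝ} (hu : 0 ≤ u) (hv : 0 ≤ v) :
    (u + v) ^ p ≤ 2 ^ p * (u ^ p + v ^ p) := by
  have h1 : u + v ≤ 2 * max u v := by
    rcases le_total u v with h | h
    · rw [max_eq_right h]; linarith
    · rw [max_eq_left h]; linarith
  have h2 : (u + v) ^ p ≤ (2 * max u v) ^ p :=
    Real.rpow_le_rpow (by linarith) h1 (hp0 hp).le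
  rw [Real.mul_rpow (by norm_num) (le_max_iff.mpr (Or.inl hu))] at h2
  refine h2.trans ?_
  have h3 : max u v ^ p ≤ u ^ p + v ^ p := by
    rcases le_total u v with h | h
    · rw [max_eq_right h]
      have := Real.rpow_nonneg hu p
      linarith
    · rw [max_eq_left h]
      have := Real.rpow_nonneg hv p
      linarith
  have h4 : (0:ℝ) ≤ 2 ^ p := Real.rpow_nonneg (by norm_num) _
  nlinarith

lemma dPmet_rpow_le_moment (hp : 1 ≤ p) (z z' : Zsp d) :
    dPmet p z z' ^ p ≤ 2 ^ p * (dPmet p 0 z ^ p + dPmet p 0 z' ^ p) := by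
  have htri : dPmet p z z' ≤ dPmet p 0 z + dPmet p 0 z' := by
    calc dPmet p z z' ≤ dPmet p z 0 + dPmet p 0 z' := dPmet_triangle hp _ _ _
    _ = dPmet p 0 z + dPmet p 0 z' := by rw [dPmet_symm]
  calc dPmet p z z' ^ p ≤ (dPmet p 0 z + dPmet p 0 z') ^ p :=
        Real.rpow_le_rpow (dPmet_nonneg _ _) htri (hp0 hp).le
  _ ≤ 2 ^ p * (dPmet p 0 z ^ p + dPmet p 0 z' ^ p) :=
        add_rpow_le hp (dPmet_nonneg _ _) (dPmet_nonneg _ _)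

lemma continuous_dpw_rpow (hp : 1 ≤ p) (hw0 : 0 ≤ w) (hw1 : w ≤ 1) :
    Continuous (fun q : Zsp d × Zsp d => dpw p w q.1 q.2 ^ p) := by
  have : (fun q : Zsp d × Zsp d => dpw p w q.1 q.2 ^ p)
      = fun q : Zsp d × Zsp d =>
        w * (∑ i, |q.1.1 i - q.2.1 i| ^ p) + (1 - w) * |q.1.2 - q.2.2| ^ p := by
    funext q
    exact dpw_rpow_p hp hw0 hw1 _ _
  rw [this]
  have habs : ∀ f g : Zsp d × Zsp d → ℝ, Continuous f → Continuous g →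
      Continuous (fun q => |f q - g q| ^ p) := by
    intro f g hf hg
    exact ((hf.sub hg).abs).rpow_const fun x => Or.inr (hp0 hp).le
  apply Continuous.add
  · apply continuous_const.mul
    apply continuous_finset_sum
    intro i _
    exact habs _ _ ((continuous_apply i).comp continuous_fst.fst)
      ((continuous_apply i).comp continuous_snd.fst)
  · exact continuous_const.mul (habs _ _ (continuous_fst.snd) (continuous_snd.snd))

lemma continuous_dPmet_rpow (hp : 1 ≤ p) (z0 : Zsp d) :
    Continuous (fun z : Zsp d => dPmet p z0 z ^ p) := by
  have : (fun z : Zsp d => dPmet p z0 z ^ p)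
      = fun z : Zsp d => (∑ i, |z0.1 i - z.1 i| ^ p) + |z0.2 - z.2| ^ p := by
    funext z
    exact dPmet_rpow_p hp _ _
  rw [this]
  have habs : ∀ f g : Zsp d → ℝ, Continuous f → Continuous g →
      Continuous (fun q => |f q - g q| ^ p) := by
    intro f g hf hg
    exact ((hf.sub hg).abs).rpow_const fun x => Or.inr (hp0 hp).le
  apply Continuous.add
  · apply continuous_finset_sum
    intro i _
    exact habs _ _ continuous_const ((continuous_apply i).comp continuous_fst)
  · exact habs _ _ continuous_const continuous_snd

lemma continuous_dPmet_rpow_pair (hp : 1 ≤ p) :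
    Continuous (fun q : Zsp d × Zsp d => dPmet p q.1 q.2 ^ p) := by
  have : (fun q : Zsp d × Zsp d => dPmet p q.1 q.2 ^ p)
      = fun q : Zsp d × Zsp d =>
        (∑ i, |q.1.1 i - q.2.1 i| ^ p) + |q.1.2 - q.2.2| ^ p := by
    funext q
    exact dPmet_rpow_p hp _ _
  rw [this]
  have habs : ∀ f g : Zsp d × Zsp d → ℝ, Continuous f → Continuous g →
      Continuous (fun q => |f q - g q| ^ p) := by
    intro f g hf hg
    exact ((hf.sub hg).abs).rpow_const fun x => Or.inr (hp0 hp).le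
  apply Continuous.add
  · apply continuous_finset_sum
    intro i _
    exact habs _ _ ((continuous_apply i).comp continuous_fst.fst)
      ((continuous_apply i).comp continuous_snd.fst)
  · exact habs _ _ continuous_fst.snd continuous_snd.snd

section PartB

variable {α β : Measure (Zsp d)}

/-- The cost set defining `Wpw`. -/
def cSet (p w : ℝ) (α β : Measure (Zsp d)) : Set ℝ :=
  {r : ℝ | ∃ π : Measure (Zsp d × Zsp d), IsCoupling π α β ∧
    r = ∫ z, dpw p w z.1 z.2 ^ p ∂π}

lemma Wpw_eq : Wpw p w α β = sInf (cSet p w α β) ^ (1/p) := rfl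

lemma isCoupling_prod (hα : IsProbabilityMeasure α) (hβ : IsProbabilityMeasure β) :
    IsCoupling (α.prod β) α β := by
  refine ⟨by infer_instance, ?_, ?_⟩
  · rw [Measure.map_fst_prod, hβ.measure_univ, one_smul]
  · rw [Measure.map_snd_prod, hα.measure_univ, one_smul]

lemma cSet_nonempty (hα : IsProbabilityMeasure α) (hβ : IsProbabilityMeasure β) :
    (cSet p w α β).Nonempty :=
  ⟨_, α.prod β, isCoupling_prod hα hβ, rfl⟩

lemma cSet_nonneg (hp : 1 ≤ p) (hw0 : 0 ≤ w) (hw1 : w ≤ 1) :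
    ∀ r ∈ cSet (d := d) p w α β, 0 ≤ r := by
  rintro r ⟨π, -, rfl⟩
  exact integral_nonneg fun q => Real.rpow_nonneg (dpw_nonneg hw0 hw1 _ _) _

lemma sInf_cSet_nonneg (hp : 1 ≤ p) (hw0 : 0 ≤ w) (hw1 : w ≤ 1) :
    0 ≤ sInf (cSet (d := d) p w α β) :=
  Real.sInf_nonneg (cSet_nonneg hp hw0 hw1)

lemma Wpw_nonneg (hp : 1 ≤ p) (hw0 : 0 ≤ w) (hw1 : w ≤ 1) : 0 ≤ Wpw p w α β :=
  Real.rpow_nonneg (sInf_cSet_nonneg hp hw0 hw1) _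

lemma Wpw_le_of_coupling (hp : 1 ≤ p) (hw0 : 0 ≤ w) (hw1 : w ≤ 1)
    {π : Measure (Zsp d × Zsp d)} (hπ : IsCoupling π α β) :
    Wpw p w α β ≤ (∫ z, dpw p w z.1 z.2 ^ p ∂π) ^ (1/p) := by
  rw [Wpw_eq]
  apply Real.rpow_le_rpow (sInf_cSet_nonneg hp hw0 hw1)
  · exact csInf_le ⟨0, cSet_nonneg hp hw0 hw1⟩ ⟨π, hπ, rfl⟩
  · positivity

/-- Integrability of the `dPmet` cost under any coupling with `P_p` marginals. -/
lemma integrable_dPmet_cost (hp : 1 ≤ p) {π : Measure (Zsp d × Zsp d)}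
    (hπ : IsCoupling π α β) (hα : MemPp p α) (hβ : MemPp p β) :
    Integrable (fun q : Zsp d × Zsp d => dPmet p q.1 q.2 ^ p) π := by
  have hπp : IsProbabilityMeasure π := hπ.1
  have h1 : Integrable (fun q : Zsp d × Zsp d => dPmet p 0 q.1 ^ p) π := by
    have := hα.2 0
    rw [← hπ.2.1] at this
    exact ((integrable_map_measure (((continuous_dPmet_rpow hp 0).aestronglyMeasurable))
      measurable_fst.aemeasurable).mp this)
  have h2 : Integrable (fun q : Zsp d × Zsp d => dPmet p 0 q.2 ^ p) π := by
    have := hβ.2 0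
    rw [← hπ.2.2] at this
    exact ((integrable_map_measure (((continuous_dPmet_rpow hp 0).aestronglyMeasurable))
      measurable_snd.aemeasurable).mp this)
  refine Integrable.mono' (((h1.add h2).const_mul (2 ^ p : ℝ)))
    (Continuous.aestronglyMeasurable ?_) ?_
  · exact (continuous_dPmet_rpow_pair hp)
  · filter_upwards with q
    rw [Real.norm_eq_abs, abs_of_nonneg (Real.rpow_nonneg (dPmet_nonneg _ _) _)]
    exact dPmet_rpow_le_moment hp q.1 q.2

lemma integrable_dpw_cost (hp : 1 ≤ p) (hw0 : 0 ≤ w) (hw1 : w ≤ 1)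
    {π : Measure (Zsp d × Zsp d)} (hπ : IsCoupling π α β) (hα : MemPp p α) (hβ : MemPp p β) :
    Integrable (fun q : Zsp d × Zsp d => dpw p w q.1 q.2 ^ p) π := by
  refine Integrable.mono' (integrable_dPmet_cost hp hπ hα hβ)
    (continuous_dpw_rpow hp hw0 hw1).aestronglyMeasurable ?_
  filter_upwards with q
  rw [Real.norm_eq_abs, abs_of_nonneg (Real.rpow_nonneg (dpw_nonneg hw0 hw1 _ _) _)]
  exact Real.rpow_le_rpow (dpw_nonneg hw0 hw1 _ _) (dpw_le_dPmet hp hw0 hw1 _ _) (hp0 hp).le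

/-- swapping a coupling -/
lemma isCoupling_swap {π : Measure (Zsp d × Zsp d)} (hπ : IsCoupling π α β) :
    IsCoupling (π.map Prod.swap) β α := by
  haveI := hπ.1
  refine ⟨Measure.isProbabilityMeasure_map measurable_swap.aemeasurable, ?_, ?_⟩
  · rw [Measure.map_map measurable_fst measurable_swap]
    exact hπ.2.2
  · rw [Measure.map_map measurable_snd measurable_swap]
    exact hπ.2.1

lemma cost_swap (hp : 1 ≤ p) (hw0 : 0 ≤ w) (hw1 : w ≤ 1) {π : Measure (Zsp d × Zsp d)} :
    ∫ z, dpw p w z.1 z.2 ^ p ∂(π.map Prod.swap) = ∫ z, dpw p w z.1 z.2 ^ p ∂π := by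
  rw [integral_map measurable_swap.aemeasurable
    (continuous_dpw_rpow hp hw0 hw1).aestronglyMeasurable]
  simp only [Prod.fst_swap, Prod.snd_swap]
  congr 1
  funext q
  rw [dpw_symm]

end PartB

section PartC

open ProbabilityTheory

lemma continuous_dpw_base (hp : 1 ≤ p) :
    Continuous (fun q : Zsp d × Zsp d =>
      w * (∑ i, |q.1.1 i - q.2.1 i| ^ p) + (1 - w) * |q.1.2 - q.2.2| ^ p) := by
  have habs : ∀ f g : Zsp d × Zsp d → ℝ, Continuous f → Continuous g →
      Continuous (fun q => |f q - g q| ^ p) := by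
    intro f g hf hg
    exact ((hf.sub hg).abs).rpow_const fun x => Or.inr (hp0 hp).le
  apply Continuous.add
  · apply continuous_const.mul
    apply continuous_finset_sum
    intro i _
    exact habs _ _ ((continuous_apply i).comp continuous_fst.fst)
      ((continuous_apply i).comp continuous_snd.fst)
  · exact continuous_const.mul (habs _ _ continuous_fst.snd continuous_snd.snd)

lemma continuous_dpw_pair (hp : 1 ≤ p) :
    Continuous (fun q : Zsp d × Zsp d => dpw p w q.1 q.2) := by
  unfold dpw
  exact (continuous_dpw_base hp).rpow_const fun x => Or.inr (by positivity)

/-- The ENNReal-valued cost of a measure on pairs. -/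
def eCost (p w : ℝ) (π : Measure (Zsp d × Zsp d)) : ℝ≥0∞ :=
  ∫⁻ q, ENNReal.ofReal (dpw p w q.1 q.2 ^ p) ∂π

lemma measurable_ofReal_dpw (hp : 1 ≤ p) :
    Measurable (fun q : Zsp d × Zsp d => ENNReal.ofReal (dpw p w q.1 q.2 ^ p)) :=
  (((continuous_dpw_pair hp).rpow_const
    fun _ => Or.inr (hp0 hp).le).measurable).ennreal_ofReal

lemma cost_eq_toReal_eCost (hp : 1 ≤ p) (hw0 : 0 ≤ w) (hw1 : w ≤ 1)
    (π : Measure (Zsp d × Zsp d)) :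
    ∫ z, dpw p w z.1 z.2 ^ p ∂π = (eCost p w π).toReal := by
  rw [show eCost p w π = ∫⁻ q, ENNReal.ofReal (dpw p w q.1 q.2 ^ p) ∂π from rfl,
    ← integral_eq_lintegral_of_nonneg_ae]
  · filter_upwards with q
    exact Real.rpow_nonneg (dpw_nonneg hw0 hw1 _ _) _
  · exact ((continuous_dpw_pair hp).rpow_const
      fun x => Or.inr (hp0 hp).le).aestronglyMeasurable

lemma eCost_lt_top (hp : 1 ≤ p) (hw0 : 0 ≤ w) (hw1 : w ≤ 1)
    {π : Measure (Zsp d × Zsp d)} {α β : Measure (Zsp d)}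
    (hπ : IsCoupling π α β) (hα : MemPp p α) (hβ : MemPp p β) :
    eCost p w π < ⊤ := by
  have hint := integrable_dpw_cost hp hw0 hw1 hπ hα hβ
  have h2 := hint.hasFiniteIntegral
  rw [hasFiniteIntegral_iff_ofReal ?_] at h2
  · exact h2
  · filter_upwards with q
    exact Real.rpow_nonneg (dpw_nonneg hw0 hw1 _ _) _

/-- Gluing lemma: couplings compose with Minkowski-type cost bound. -/
lemma glue (hp : 1 ≤ p) (hw0 : 0 ≤ w) (hw1 : w ≤ 1)
    {a b c : Measure (Zsp d)} {π1 π2 : Measure (Zsp d × Zsp d)}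
    (ha : MemPp p a) (hb : MemPp p b) (hc : MemPp p c)
    (h1 : IsCoupling π1 a b) (h2 : IsCoupling π2 b c) :
    ∃ τ : Measure (Zsp d × Zsp d), IsCoupling τ a c ∧
      (∫ z, dpw p w z.1 z.2 ^ p ∂τ) ^ (1/p)
        ≤ (∫ z, dpw p w z.1 z.2 ^ p ∂π1) ^ (1/p)
          + (∫ z, dpw p w z.1 z.2 ^ p ∂π2) ^ (1/p) := by
  classical
  haveI hb1 : IsProbabilityMeasure b := hb.1
  set ρ : Measure (Zsp d × Zsp d) := π1.map Prod.swap with hρ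
  have hρc : IsCoupling ρ b a := isCoupling_swap h1
  haveI : IsProbabilityMeasure ρ := hρc.1
  haveI : IsProbabilityMeasure π2 := h2.1
  have hρfst : ρ.fst = b := hρc.2.1
  have hπ2fst : π2.fst = b := h2.2.1
  set κ : Kernel (Zsp d) (Zsp d) := ρ.condKernel with hκ
  set η : Kernel (Zsp d) (Zsp d) := π2.condKernel with hη
  have hκρ : b ⊗ₘ κ = ρ := by rw [hκ, ← hρfst]; exact ρ.disintegrate ρ.condKernel
  have hηπ : b ⊗ₘ η = π2 := by rw [hη, ← hπ2fst]; exact π2.disintegrate π2.condKernel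
  set m : Measure (Zsp d × (Zsp d × Zsp d)) := b ⊗ₘ (κ.prod η) with hm
  have hmeas1 : Measurable (fun x : Zsp d × (Zsp d × Zsp d) => (x.1, x.2.1)) := by fun_prop
  have hmeas2 : Measurable (fun x : Zsp d × (Zsp d × Zsp d) => (x.1, x.2.2)) := by fun_prop
  have hproj1 : m.map (fun x => (x.1, x.2.1)) = ρ := by
    rw [← hκρ]
    ext s hs
    rw [Measure.map_apply hmeas1 hs, hm, Measure.compProd_apply (hmeas1 hs),
      Measure.compProd_apply hs]
    apply lintegral_congr
    intro y
    rw [Kernel.prod_apply]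
    have hsec : Prod.mk y ⁻¹' ((fun x : Zsp d × (Zsp d × Zsp d) => (x.1, x.2.1)) ⁻¹' s)
        = Prod.fst ⁻¹' (Prod.mk y ⁻¹' s) := rfl
    rw [hsec, ← Set.prod_univ, Measure.prod_prod, measure_univ, mul_one]
  have hproj2 : m.map (fun x => (x.1, x.2.2)) = π2 := by
    rw [← hηπ]
    ext s hs
    rw [Measure.map_apply hmeas2 hs, hm, Measure.compProd_apply (hmeas2 hs),
      Measure.compProd_apply hs]
    apply lintegral_congr
    intro y
    rw [Kernel.prod_apply]
    have hsec : Prod.mk y ⁻¹' ((fun x : Zsp d × (Zsp d × Zsp d) => (x.1, x.2.2)) ⁻¹' s)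
        = Prod.snd ⁻¹' (Prod.mk y ⁻¹' s) := rfl
    rw [hsec, ← Set.univ_prod, Measure.prod_prod, measure_univ, one_mul]
  haveI : IsProbabilityMeasure m := by
    constructor
    rw [hm, Measure.compProd_apply MeasurableSet.univ]
    simp [measure_univ]
  set τ : Measure (Zsp d × Zsp d) := m.map Prod.snd with hτdef
  have hτc : IsCoupling τ a c := by
    refine ⟨Measure.isProbabilityMeasure_map measurable_snd.aemeasurable, ?_, ?_⟩
    · rw [hτdef, Measure.map_map measurable_fst measurable_snd]
      have : (Prod.fst ∘ Prod.snd : Zsp d × (Zsp d × Zsp d) → Zsp d)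
          = Prod.snd ∘ (fun x => (x.1, x.2.1)) := rfl
      rw [this, ← Measure.map_map measurable_snd hmeas1, hproj1]
      exact hρc.2.2
    · rw [hτdef, Measure.map_map measurable_snd measurable_snd]
      have : (Prod.snd ∘ Prod.snd : Zsp d × (Zsp d × Zsp d) → Zsp d)
          = Prod.snd ∘ (fun x => (x.1, x.2.2)) := rfl
      rw [this, ← Measure.map_map measurable_snd hmeas2, hproj2]
      exact h2.2.2
  refine ⟨τ, hτc, ?_⟩
  -- ENNReal cost computation
  set f := fun x : Zsp d × (Zsp d × Zsp d) => ENNReal.ofReal (dpw p w x.2.1 x.1) with hf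
  set g := fun x : Zsp d × (Zsp d × Zsp d) => ENNReal.ofReal (dpw p w x.1 x.2.2) with hg
  have hfm : Measurable f :=
    (((continuous_dpw_pair hp).comp (by fun_prop :
      Continuous fun x : Zsp d × (Zsp d × Zsp d) => (x.2.1, x.1))).measurable).ennreal_ofReal
  have hgm : Measurable g :=
    (((continuous_dpw_pair hp).comp (by fun_prop :
      Continuous fun x : Zsp d × (Zsp d × Zsp d) => (x.1, x.2.2))).measurable).ennreal_ofReal
  have hτcost : eCost p w τ = ∫⁻ x, ENNReal.ofReal (dpw p w x.2.1 x.2.2 ^ p) ∂m := by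
    rw [show eCost p w τ = ∫⁻ q, ENNReal.ofReal (dpw p w q.1 q.2 ^ p) ∂τ from rfl, hτdef,
      lintegral_map (measurable_ofReal_dpw hp) measurable_snd]
  have hpt : ∀ x : Zsp d × (Zsp d × Zsp d),
      ENNReal.ofReal (dpw p w x.2.1 x.2.2 ^ p) ≤ ((f + g) x) ^ p := by
    intro x
    have htri : dpw p w x.2.1 x.2.2 ≤ dpw p w x.2.1 x.1 + dpw p w x.1 x.2.2 :=
      dpw_triangle hp hw0 hw1 _ _ _
    calc ENNReal.ofReal (dpw p w x.2.1 x.2.2 ^ p)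
        = ENNReal.ofReal (dpw p w x.2.1 x.2.2) ^ p :=
          (ENNReal.ofReal_rpow_of_nonneg (dpw_nonneg hw0 hw1 _ _) (hp0 hp).le).symm
      _ ≤ ENNReal.ofReal (dpw p w x.2.1 x.1 + dpw p w x.1 x.2.2) ^ p :=
          ENNReal.rpow_le_rpow (ENNReal.ofReal_le_ofReal htri) (hp0 hp).le
      _ = ((f + g) x) ^ p := by
          rw [ENNReal.ofReal_add (dpw_nonneg hw0 hw1 _ _) (dpw_nonneg hw0 hw1 _ _)]
          rfl
  have hfcost : ∫⁻ x, f x ^ p ∂m = eCost p w π1 := by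
    have hfp : ∀ x, f x ^ p = ENNReal.ofReal (dpw p w x.2.1 x.1 ^ p) := fun x =>
      ENNReal.ofReal_rpow_of_nonneg (dpw_nonneg hw0 hw1 _ _) (hp0 hp).le
    trans (∫⁻ x, ENNReal.ofReal (dpw p w x.2.1 x.1 ^ p) ∂m)
    · exact lintegral_congr hfp
    have M21 : Measurable (fun q : Zsp d × Zsp d =>
        ENNReal.ofReal (dpw p w q.2 q.1 ^ p)) :=
      (((continuous_dpw_pair hp).comp continuous_swap).rpow_const
        fun _ => Or.inr (hp0 hp).le).measurable.ennreal_ofReal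
    trans (∫⁻ q : Zsp d × Zsp d, ENNReal.ofReal (dpw p w q.2 q.1 ^ p) ∂ρ)
    · rw [← hproj1, lintegral_map M21 hmeas1]
    rw [hρ, lintegral_map M21 measurable_swap]
    rfl
  have hgcost : ∫⁻ x, g x ^ p ∂m = eCost p w π2 := by
    have hgp : ∀ x, g x ^ p = ENNReal.ofReal (dpw p w x.1 x.2.2 ^ p) := fun x =>
      ENNReal.ofReal_rpow_of_nonneg (dpw_nonneg hw0 hw1 _ _) (hp0 hp).le
    trans (∫⁻ x, ENNReal.ofReal (dpw p w x.1 x.2.2 ^ p) ∂m)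
    · exact lintegral_congr hgp
    trans (∫⁻ q : Zsp d × Zsp d, ENNReal.ofReal (dpw p w q.1 q.2 ^ p) ∂π2)
    · rw [← hproj2, lintegral_map (measurable_ofReal_dpw hp) hmeas2]
    rfl
  have key : (eCost p w τ) ^ (1/p) ≤ (eCost p w π1) ^ (1/p) + (eCost p w π2) ^ (1/p) := by
    calc (eCost p w τ) ^ (1/p)
        ≤ (∫⁻ x, ((f + g) x) ^ p ∂m) ^ (1/p) := by
          rw [hτcost]
          exact ENNReal.rpow_le_rpow (lintegral_mono hpt) (by positivity)
      _ ≤ (∫⁻ x, f x ^ p ∂m) ^ (1/p) + (∫⁻ x, g x ^ p ∂m) ^ (1/p) :=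
          ENNReal.lintegral_Lp_add_le hfm.aemeasurable hgm.aemeasurable hp
      _ = (eCost p w π1) ^ (1/p) + (eCost p w π2) ^ (1/p) := by rw [hfcost, hgcost]
  have f1 : eCost p w π1 ≠ ⊤ := (eCost_lt_top hp hw0 hw1 h1 ha hb).ne
  have f2 : eCost p w π2 ≠ ⊤ := (eCost_lt_top hp hw0 hw1 h2 hb hc).ne
  rw [cost_eq_toReal_eCost hp hw0 hw1, cost_eq_toReal_eCost hp hw0 hw1,
    cost_eq_toReal_eCost hp hw0 hw1, ENNReal.toReal_rpow, ENNReal.toReal_rpow,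
    ENNReal.toReal_rpow,
    ← ENNReal.toReal_add (ENNReal.rpow_ne_top_of_nonneg (by positivity) f1)
      (ENNReal.rpow_ne_top_of_nonneg (by positivity) f2)]
  exact ENNReal.toReal_mono (ENNReal.add_ne_top.mpr
    ⟨ENNReal.rpow_ne_top_of_nonneg (by positivity) f1,
     ENNReal.rpow_ne_top_of_nonneg (by positivity) f2⟩) key

end PartC

section PartD

open Metric ProbabilityTheory

/-- compare `dPmet` with the ambient product metric -/
lemma dPmet_le_dist (hp : 1 ≤ p) (z z' : Zsp d) :
    dPmet p z z' ≤ (d + 1) * dist z z' := by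
  have hd0 : (0:ℝ) ≤ dist z z' := dist_nonneg
  have hterm : ∀ i : Fin d, |z.1 i - z'.1 i| ≤ dist z z' := by
    intro i
    have h1 : |z.1 i - z'.1 i| = dist (z.1 i) (z'.1 i) := (Real.dist_eq _ _).symm
    rw [h1]
    exact le_trans (dist_le_pi_dist z.1 z'.1 i) (le_trans (le_max_left _ _) (le_of_eq Prod.dist_eq.symm))
  have hlast : |z.2 - z'.2| ≤ dist z z' := by
    have h1 : |z.2 - z'.2| = dist z.2 z'.2 := (Real.dist_eq _ _).symm
    rw [h1]
    exact le_trans (le_max_right _ _) (le_of_eq Prod.dist_eq.symm)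
  have hbase : (∑ i, |z.1 i - z'.1 i| ^ p) + |z.2 - z'.2| ^ p
      ≤ (d + 1) * dist z z' ^ p := by
    have h1 : ∀ i : Fin d, |z.1 i - z'.1 i| ^ p ≤ dist z z' ^ p := fun i =>
      Real.rpow_le_rpow (abs_nonneg _) (hterm i) (hp0 hp).le
    have h2 : |z.2 - z'.2| ^ p ≤ dist z z' ^ p :=
      Real.rpow_le_rpow (abs_nonneg _) hlast (hp0 hp).le
    have h3 : (∑ i, |z.1 i - z'.1 i| ^ p) ≤ (d : ℝ) * dist z z' ^ p := by
      calc (∑ i : Fin d, |z.1 i - z'.1 i| ^ p) ≤ ∑ _i : Fin d, dist z z' ^ p :=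
            Finset.sum_le_sum fun i _ => h1 i
        _ = (d : ℝ) * dist z z' ^ p := by
            rw [Finset.sum_const, Finset.card_univ, Fintype.card_fin, nsmul_eq_mul]
    nlinarith [Real.rpow_nonneg hd0 p]
  calc dPmet p z z' ≤ ((d + 1) * dist z z' ^ p) ^ (1/p) := by
        apply Real.rpow_le_rpow ?_ hbase (by positivity)
        have h1 := sum_abs_nonneg (p := p) z z'
        have h2 : (0:ℝ) ≤ |z.2 - z'.2| ^ p := Real.rpow_nonneg (abs_nonneg _) _
        linarith
    _ = ((d:ℝ) + 1) ^ (1/p) * dist z z' := by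
        rw [Real.mul_rpow (by positivity) (Real.rpow_nonneg hd0 _),
          ← Real.rpow_mul hd0, one_div, mul_inv_cancel₀ (hp0 hp).ne', Real.rpow_one]
    _ ≤ (d + 1) * dist z z' := by
        apply mul_le_mul_of_nonneg_right ?_ hd0
        calc ((d:ℝ) + 1) ^ (1/p) ≤ ((d:ℝ) + 1) ^ (1:ℝ) := by
              apply Real.rpow_le_rpow_of_exponent_le (by push_cast; linarith)
              rw [div_le_one (hp0 hp)]
              exact hp
          _ = (d + 1) := by rw [Real.rpow_one]

/-- A partition of `Zsp d` into small bounded measurable null-frontier pieces. -/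
lemma exists_partition (μ : Measure (Zsp d)) [IsFiniteMeasure μ] {ε : ℝ} (hε : 0 < ε) :
    ∃ As : ℕ → Set (Zsp d), (∀ n, MeasurableSet (As n)) ∧
      (∀ n, Bornology.IsBounded (As n)) ∧ (∀ n, diam (As n) ≤ ε) ∧
      ((⋃ n, As n) = Set.univ) ∧ Pairwise (Function.onFun Disjoint As) ∧
      (∀ n, μ (frontier (As n)) = 0) := by
  obtain ⟨xs, hxs⟩ := TopologicalSpace.exists_dense_seq (Zsp d)
  -- choose radii with null spheres
  have hrad : ∀ n : ℕ, ∃ r : ℝ, r ∈ Set.Ioo (ε/4) (ε/2) ∧ μ (sphere (xs n) r) = 0 := by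
    intro n
    by_contra hcon
    push_neg at hcon
    have hsubC : Set.Ioo (ε/4) (ε/2) ⊆ {r : ℝ | 0 < μ (sphere (xs n) r)} := by
      intro rr hrr
      exact pos_iff_ne_zero.mpr (hcon rr hrr)
    have hcnt : ({r : ℝ | 0 < μ (sphere (xs n) r)}).Countable := by
      apply Measure.countable_meas_pos_of_disjoint_iUnion
        (As := fun rr : ℝ => sphere (xs n) rr)
      · exact fun rr => isClosed_sphere.measurableSet
      · intro r1 r2 hne
        rw [Function.onFun, Set.disjoint_left]
        intro y hy1 hy2
        rw [mem_sphere] at hy1 hy2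
        exact hne (hy1 ▸ hy2 ▸ rfl)
    have : (Set.Ioo (ε/4) (ε/2)).Countable := hcnt.mono hsubC
    have hz := this.measure_zero (volume : Measure ℝ)
    rw [Real.volume_Ioo] at hz
    have : ε/2 - ε/4 ≤ 0 := by
      by_contra hpos
      push_neg at hpos
      exact (ENNReal.ofReal_pos.mpr hpos).ne' hz
    linarith
  choose r hr1 hr2 using hrad
  set Bs : ℕ → Set (Zsp d) := fun n => ball (xs n) (r n) with hBs
  refine ⟨disjointed Bs, ?_, ?_, ?_, ?_, ?_, ?_⟩
  · exact fun n => MeasurableSet.disjointed (fun i => measurableSet_ball) n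
  · exact fun n => (isBounded_ball).subset (disjointed_subset Bs n)
  · intro n
    refine le_trans (diam_mono (disjointed_subset Bs n) isBounded_ball) ?_
    refine le_trans (diam_ball (by linarith [(hr1 n).1])) ?_
    linarith [(hr1 n).2]
  · rw [iUnion_disjointed]
    apply Set.eq_univ_of_forall
    intro z
    obtain ⟨n, hn⟩ := hxs.exists_dist_lt z (by positivity : (0:ℝ) < ε/4)
    refine Set.mem_iUnion.mpr ⟨n, ?_⟩
    simp only [hBs, mem_ball]
    linarith [(hr1 n).1]
  · exact disjoint_disjointed Bs
  · intro n
    have hdiff : ∀ s t : Set (Zsp d), frontier (s \ t) ⊆ frontier s ∪ frontier t := by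
      intro s t
      refine (frontier_inter_subset s tᶜ).trans ?_
      rw [frontier_compl]
      intro y hy
      rcases hy with hy | hy
      · exact Or.inl hy.1
      · exact Or.inr hy.2
    have hpartial : ∀ N : ℕ, frontier ((partialSups Bs) N)
        ⊆ ⋃ i ∈ Finset.range (N+1), sphere (xs i) (r i) := by
      intro N
      induction N with
      | zero =>
        rw [partialSups_zero]
        refine (frontier_ball_subset_sphere).trans ?_
        intro y hy
        exact Set.mem_biUnion (Finset.mem_range.mpr (by omega)) hy
      | succ N ih =>
        rw [partialSups_add_one]
        refine (frontier_union_subset _ _).trans ?_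
        intro y hy
        rcases hy with hy | hy
        · obtain ⟨i, hi, hmem⟩ := Set.mem_iUnion₂.mp (ih hy.1)
          exact Set.mem_biUnion (Finset.mem_range.mpr (by
            have := Finset.mem_range.mp hi; omega)) hmem
        · exact Set.mem_biUnion (Finset.mem_range.mpr (by omega))
            (frontier_ball_subset_sphere hy.2)
    have hsub : frontier (disjointed Bs n) ⊆ ⋃ i ∈ Finset.range (n+1), sphere (xs i) (r i) := by
      cases n with
      | zero =>
        rw [disjointed_zero]
        refine (frontier_ball_subset_sphere).trans ?_
        intro y hy
        exact Set.mem_biUnion (Finset.mem_range.mpr (by omega)) hy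
      | succ n =>
        rw [disjointed_add_one]
        refine (hdiff _ _).trans ?_
        intro y hy
        rcases hy with hy | hy
        · exact Set.mem_biUnion (Finset.mem_range.mpr (by omega))
            (frontier_ball_subset_sphere hy)
        · obtain ⟨i, hi, hmem⟩ := Set.mem_iUnion₂.mp (hpartial n hy)
          exact Set.mem_biUnion (Finset.mem_range.mpr (by
            have := Finset.mem_range.mp hi; omega)) hmem
    refine measure_mono_null hsub ?_
    refine (measure_biUnion_null_iff (Set.to_countable _)).mpr ?_
    intro i _
    exact hr2 i


/-- ENNReal cost with respect to `dPmet`. -/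
def eCostP (p : ℝ) (π : Measure (Zsp d × Zsp d)) : ℝ≥0∞ :=
  ∫⁻ q, ENNReal.ofReal (dPmet p q.1 q.2 ^ p) ∂π

lemma costP_eq_toReal (hp : 1 ≤ p) (π : Measure (Zsp d × Zsp d)) :
    ∫ z, dPmet p z.1 z.2 ^ p ∂π = (eCostP p π).toReal := by
  rw [show eCostP p π = ∫⁻ q, ENNReal.ofReal (dPmet p q.1 q.2 ^ p) ∂π from rfl,
    ← integral_eq_lintegral_of_nonneg_ae]
  · filter_upwards with q
    exact Real.rpow_nonneg (dPmet_nonneg _ _) _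
  · exact (continuous_dPmet_rpow_pair hp).aestronglyMeasurable

lemma measurable_G (hp : 1 ≤ p) :
    Measurable (fun q : Zsp d × Zsp d => ENNReal.ofReal (dPmet p q.1 q.2 ^ p)) :=
  (continuous_dPmet_rpow_pair hp).measurable.ennreal_ofReal

lemma map_measure_finset_sum {ι : Type*} (J : Finset ι) (μ : ι → Measure (Zsp d × Zsp d))
    {f : Zsp d × Zsp d → Zsp d} (hf : Measurable f) :
    (∑ i ∈ J, μ i).map f = ∑ i ∈ J, (μ i).map f := by
  ext s hs
  rw [Measure.map_apply hf hs, Measure.finset_sum_apply, Measure.finset_sum_apply]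
  exact Finset.sum_congr rfl fun i _ => (Measure.map_apply hf hs).symm

lemma restrict_finset_sum (ν : Measure (Zsp d)) (As : ℕ → Set (Zsp d))
    (hmeasA : ∀ n, MeasurableSet (As n)) (hdisj : Pairwise (Function.onFun Disjoint As)) (J : Finset ℕ) :
    ∑ i ∈ J, ν.restrict (As i) = ν.restrict (⋃ i ∈ J, As i) := by
  ext s hs
  rw [Measure.finset_sum_apply, Measure.restrict_apply hs, Set.inter_iUnion₂,
    measure_biUnion_finset
      (fun i _ j _ hij => ((hdisj hij).mono Set.inter_subset_right Set.inter_subset_right))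
      (fun i _ => hs.inter (hmeasA i))]
  exact Finset.sum_congr rfl fun i _ => by rw [Measure.restrict_apply hs]

lemma inv_mul_le_one' (a : ℝ≥0∞) : a⁻¹ * a ≤ 1 := by
  rcases eq_or_ne a 0 with h | h
  · simp [h]
  rcases eq_or_ne a ⊤ with h' | h'
  · simp [h']
  · rw [ENNReal.inv_mul_cancel h h']

lemma ofReal_two_rpow (hp : 1 ≤ p) : ENNReal.ofReal (2 ^ p) = (2 : ℝ≥0∞) ^ p := by
  rw [← ENNReal.ofReal_rpow_of_pos (by norm_num : (0:ℝ) < 2)]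
  norm_num

/-- The main deterministic coupling construction. -/
lemma coupling_construction (hp : 1 ≤ p) {ν μ : Measure (Zsp d)}
    (hν : IsProbabilityMeasure ν) (hμ : IsProbabilityMeasure μ)
    (As : ℕ → Set (Zsp d)) (hmeasA : ∀ n, MeasurableSet (As n))
    (hbound : ∀ n, Bornology.IsBounded (As n))
    (hdisj : Pairwise (Function.onFun Disjoint As)) (J : Finset ℕ)
    {ε2 : ℝ} (hε2 : 0 < ε2) (hdiam : ∀ n, Metric.diam (As n) ≤ ε2)
    {θ : ℝ≥0∞} (hmass : 1 - θ ≤ ∑ i ∈ J, min (ν (As i)) (μ (As i)))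
    {R : ℝ} (hR : 0 ≤ R) {tν tμ : ℝ≥0∞}
    (htν : ∫⁻ z, ENNReal.ofReal (dPmet p 0 z ^ p - min (dPmet p 0 z ^ p) R) ∂ν ≤ tν)
    (htμ : ∫⁻ z, ENNReal.ofReal (dPmet p 0 z ^ p - min (dPmet p 0 z ^ p) R) ∂μ ≤ tμ) :
    ∃ π : Measure (Zsp d × Zsp d), IsCoupling π ν μ ∧
      eCostP p π ≤ ENNReal.ofReal (((d+1) * ε2) ^ p)
        + 2 ^ p * (tν + tμ + 2 * ENNReal.ofReal R * θ) := by
  classical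
  set f : Zsp d → ℝ := fun z => dPmet p 0 z ^ p with hfdef
  set T : Zsp d → ℝ≥0∞ := fun z => ENNReal.ofReal (f z - min (f z) R) with hTdef
  set F : Zsp d → ℝ≥0∞ := fun z => ENNReal.ofReal (f z) with hFdef
  have hFmeas : Measurable F := (continuous_dPmet_rpow hp 0).measurable.ennreal_ofReal
  have hfnonneg : ∀ z, 0 ≤ f z := fun z => Real.rpow_nonneg (dPmet_nonneg _ _) _
  have hFleT : ∀ z, F z ≤ T z + ENNReal.ofReal R := by
    intro z
    calc F z ≤ ENNReal.ofReal ((f z - min (f z) R) + R) := by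
          apply ENNReal.ofReal_le_ofReal
          have h1 := min_le_right (f z) R
          linarith
      _ = T z + ENNReal.ofReal R := by
          rw [ENNReal.ofReal_add ?_ hR]
          have h1 := min_le_left (f z) R
          linarith
  set ci : ℕ → ℝ≥0∞ := fun i => min (ν (As i)) (μ (As i)) with hcidef
  set aν : ℕ → ℝ≥0∞ := fun i => ci i * (ν (As i))⁻¹ with haν
  set aμ : ℕ → ℝ≥0∞ := fun i => ci i * (μ (As i))⁻¹ with haμ
  set U : Set (Zsp d) := ⋃ i ∈ J, As i with hUdef
  have hUmeas : MeasurableSet U :=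
    MeasurableSet.biUnion (Set.to_countable _) (fun b _ => hmeasA b)
  have hνA_ne_top : ∀ i, ν (As i) ≠ ⊤ := fun i => measure_ne_top ν _
  have hμA_ne_top : ∀ i, μ (As i) ≠ ⊤ := fun i => measure_ne_top μ _
  have hciν : ∀ i, ci i ≤ ν (As i) := fun i => min_le_left _ _
  have hciμ : ∀ i, ci i ≤ μ (As i) := fun i => min_le_right _ _
  have haν_le_one : ∀ i, aν i ≤ 1 := by
    intro i
    rcases eq_or_ne (ν (As i)) 0 with h0 | h0
    · have hci0 : ci i = 0 := le_antisymm (h0 ▸ hciν i) zero_le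
      simp [haν, hci0]
    · calc aν i ≤ ν (As i) * (ν (As i))⁻¹ := mul_le_mul_left (hciν i) _
        _ = 1 := ENNReal.mul_inv_cancel h0 (hνA_ne_top i)
  have haμ_le_one : ∀ i, aμ i ≤ 1 := by
    intro i
    rcases eq_or_ne (μ (As i)) 0 with h0 | h0
    · have hci0 : ci i = 0 := le_antisymm (h0 ▸ hciμ i) zero_le
      simp [haμ, hci0]
    · calc aμ i ≤ μ (As i) * (μ (As i))⁻¹ := mul_le_mul_left (hciμ i) _
        _ = 1 := ENNReal.mul_inv_cancel h0 (hμA_ne_top i)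
  set main : ℕ → Measure (Zsp d × Zsp d) := fun i =>
    (ci i * ((ν (As i)) * (μ (As i)))⁻¹) • ((ν.restrict (As i)).prod (μ.restrict (As i)))
    with hmain
  set Lν : Measure (Zsp d) := (∑ i ∈ J, (1 - aν i) • ν.restrict (As i)) + ν.restrict Uᶜ
    with hLν
  set Lμ : Measure (Zsp d) := (∑ i ∈ J, (1 - aμ i) • μ.restrict (As i)) + μ.restrict Uᶜ
    with hLμ
  set S : ℝ≥0∞ := ∑ i ∈ J, ci i with hS
  set δ : ℝ≥0∞ := 1 - S with hδ
  have hνU : ν U = ∑ i ∈ J, ν (As i) := by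
    rw [hUdef]
    exact measure_biUnion_finset (fun i _ j _ hij => hdisj hij) (fun i _ => hmeasA i)
  have hμU : μ U = ∑ i ∈ J, μ (As i) := by
    rw [hUdef]
    exact measure_biUnion_finset (fun i _ j _ hij => hdisj hij) (fun i _ => hmeasA i)
  have hSν : S ≤ ν U := by rw [hνU, hS]; exact Finset.sum_le_sum fun i _ => hciν i
  have hSμ : S ≤ μ U := by rw [hμU, hS]; exact Finset.sum_le_sum fun i _ => hciμ i
  have hS_le_one : S ≤ 1 := le_trans hSν prob_le_one
  have hS_ne_top : S ≠ ⊤ := (lt_of_le_of_lt hS_le_one ENNReal.one_lt_top).ne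
  have hδ_le_one : δ ≤ 1 := tsub_le_self
  have hδ_ne_top : δ ≠ ⊤ := (lt_of_le_of_lt hδ_le_one ENNReal.one_lt_top).ne
  have hδ_le_θ : δ ≤ θ := by
    rw [hδ]
    refine tsub_le_iff_right.mpr ?_
    rw [add_comm]
    exact tsub_le_iff_right.mp hmass
  have hcombine : ∀ (m : Measure (Zsp d)) (a : ℝ≥0∞), a ≤ 1 →
      a • m + (1 - a) • m = m := by
    intro m a ha
    rw [← add_smul, add_comm, tsub_add_cancel_of_le ha, one_smul]
  have hdecompν : (∑ i ∈ J, aν i • ν.restrict (As i)) + Lν = ν := by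
    rw [hLν, ← add_assoc, ← Finset.sum_add_distrib]
    rw [Finset.sum_congr rfl (fun i _ => hcombine (ν.restrict (As i)) (aν i) (haν_le_one i)),
      restrict_finset_sum ν As hmeasA hdisj J, ← hUdef,
      Measure.restrict_add_restrict_compl hUmeas]
  have hdecompμ : (∑ i ∈ J, aμ i • μ.restrict (As i)) + Lμ = μ := by
    rw [hLμ, ← add_assoc, ← Finset.sum_add_distrib]
    rw [Finset.sum_congr rfl (fun i _ => hcombine (μ.restrict (As i)) (aμ i) (haμ_le_one i)),
      restrict_finset_sum μ As hmeasA hdisj J, ← hUdef,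
      Measure.restrict_add_restrict_compl hUmeas]
  have hLν_le : Lν ≤ ν := by
    conv_rhs => rw [← hdecompν]
    exact Measure.le_add_left le_rfl
  have hLμ_le : Lμ ≤ μ := by
    conv_rhs => rw [← hdecompμ]
    exact Measure.le_add_left le_rfl
  have hsum_subν : ∑ i ∈ J, (ν (As i) - ci i) = ν U - S := by
    apply ENNReal.eq_sub_of_add_eq hS_ne_top
    rw [hS, ← Finset.sum_add_distrib,
      Finset.sum_congr rfl (fun i _ => tsub_add_cancel_of_le (hciν i)), hνU]
  have hsum_subμ : ∑ i ∈ J, (μ (As i) - ci i) = μ U - S := by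
    apply ENNReal.eq_sub_of_add_eq hS_ne_top
    rw [hS, ← Finset.sum_add_distrib,
      Finset.sum_congr rfl (fun i _ => tsub_add_cancel_of_le (hciμ i)), hμU]
  have hmass_iν : ∀ i ∈ J, ((1 - aν i) • ν.restrict (As i)) Set.univ = ν (As i) - ci i := by
    intro i _
    rw [Measure.smul_apply, smul_eq_mul, Measure.restrict_apply_univ]
    rcases eq_or_ne (ν (As i)) 0 with h0 | h0
    · have hci0 : ci i = 0 := le_antisymm (h0 ▸ hciν i) zero_le
      simp [h0, hci0]
    · rw [ENNReal.sub_mul (fun _ _ => hνA_ne_top i), one_mul, haν,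
        mul_assoc, ENNReal.inv_mul_cancel h0 (hνA_ne_top i), mul_one]
  have hmass_iμ : ∀ i ∈ J, ((1 - aμ i) • μ.restrict (As i)) Set.univ = μ (As i) - ci i := by
    intro i _
    rw [Measure.smul_apply, smul_eq_mul, Measure.restrict_apply_univ]
    rcases eq_or_ne (μ (As i)) 0 with h0 | h0
    · have hci0 : ci i = 0 := le_antisymm (h0 ▸ hciμ i) zero_le
      simp [h0, hci0]
    · rw [ENNReal.sub_mul (fun _ _ => hμA_ne_top i), one_mul, haμ,
        mul_assoc, ENNReal.inv_mul_cancel h0 (hμA_ne_top i), mul_one]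
  have hLν_univ : Lν Set.univ = δ := by
    rw [hLν, Measure.add_apply, Measure.finset_sum_apply,
      Finset.sum_congr rfl hmass_iν, hsum_subν,
      Measure.restrict_apply_univ, prob_compl_eq_one_sub hUmeas, hδ]
    apply ENNReal.eq_sub_of_add_eq hS_ne_top
    rw [add_comm (ν U - S) (1 - ν U), add_assoc, tsub_add_cancel_of_le hSν,
      tsub_add_cancel_of_le prob_le_one]
  have hLμ_univ : Lμ Set.univ = δ := by
    rw [hLμ, Measure.add_apply, Measure.finset_sum_apply,
      Finset.sum_congr rfl hmass_iμ, hsum_subμ,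
      Measure.restrict_apply_univ, prob_compl_eq_one_sub hUmeas, hδ]
    apply ENNReal.eq_sub_of_add_eq hS_ne_top
    rw [add_comm (μ U - S) (1 - μ U), add_assoc, tsub_add_cancel_of_le hSμ,
      tsub_add_cancel_of_le prob_le_one]
  haveI hLνfin : IsFiniteMeasure Lν :=
    ⟨by rw [hLν_univ]; exact lt_of_le_of_lt hδ_le_one ENNReal.one_lt_top⟩
  haveI hLμfin : IsFiniteMeasure Lμ :=
    ⟨by rw [hLμ_univ]; exact lt_of_le_of_lt hδ_le_one ENNReal.one_lt_top⟩
  set π : Measure (Zsp d × Zsp d) := (∑ i ∈ J, main i) + δ⁻¹ • (Lν.prod Lμ) with hπ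
  have hmapfst_main : ∀ i ∈ J, (main i).map Prod.fst = aν i • ν.restrict (As i) := by
    intro i _
    rw [hmain]
    rw [Measure.map_smul, Measure.map_fst_prod, Measure.restrict_apply_univ, smul_smul]
    congr 1
    rcases eq_or_ne (μ (As i)) 0 with h0 | h0
    · have hci0 : ci i = 0 := le_antisymm (h0 ▸ hciμ i) zero_le
      simp [haν, hci0]
    · rw [ENNReal.mul_inv (Or.inr (hμA_ne_top i)) (Or.inl (hνA_ne_top i))]
      calc ci i * ((ν (As i))⁻¹ * (μ (As i))⁻¹) * μ (As i)
          = ci i * (ν (As i))⁻¹ * ((μ (As i))⁻¹ * μ (As i)) := by ring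
        _ = aν i := by rw [ENNReal.inv_mul_cancel h0 (hμA_ne_top i), mul_one]
  have hmapsnd_main : ∀ i ∈ J, (main i).map Prod.snd = aμ i • μ.restrict (As i) := by
    intro i _
    rw [hmain]
    rw [Measure.map_smul, Measure.map_snd_prod, Measure.restrict_apply_univ, smul_smul]
    congr 1
    rcases eq_or_ne (ν (As i)) 0 with h0 | h0
    · have hci0 : ci i = 0 := le_antisymm (h0 ▸ hciν i) zero_le
      simp [haμ, hci0]
    · rw [ENNReal.mul_inv (Or.inr (hμA_ne_top i)) (Or.inl (hνA_ne_top i))]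
      calc ci i * ((ν (As i))⁻¹ * (μ (As i))⁻¹) * ν (As i)
          = ci i * (μ (As i))⁻¹ * ((ν (As i))⁻¹ * ν (As i)) := by ring
        _ = aμ i := by rw [ENNReal.inv_mul_cancel h0 (hνA_ne_top i), mul_one]
  have hmap_left_ν : (δ⁻¹ • (Lν.prod Lμ)).map Prod.fst = Lν := by
    rw [Measure.map_smul, Measure.map_fst_prod, hLμ_univ, smul_smul]
    rcases eq_or_ne δ 0 with h0 | h0
    · have hLν0 : Lν = 0 := Measure.measure_univ_eq_zero.mp (by rw [hLν_univ, h0])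
      rw [hLν0, smul_zero]
    · rw [ENNReal.inv_mul_cancel h0 hδ_ne_top, one_smul]
  have hmap_left_μ : (δ⁻¹ • (Lν.prod Lμ)).map Prod.snd = Lμ := by
    rw [Measure.map_smul, Measure.map_snd_prod, hLν_univ, smul_smul]
    rcases eq_or_ne δ 0 with h0 | h0
    · have hLμ0 : Lμ = 0 := Measure.measure_univ_eq_zero.mp (by rw [hLμ_univ, h0])
      rw [hLμ0, smul_zero]
    · rw [ENNReal.inv_mul_cancel h0 hδ_ne_top, one_smul]
  have hfst : π.map Prod.fst = ν := by
    rw [hπ, Measure.map_add _ _ measurable_fst, map_measure_finset_sum J main measurable_fst,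
      Finset.sum_congr rfl hmapfst_main, hmap_left_ν]
    exact hdecompν
  have hsnd : π.map Prod.snd = μ := by
    rw [hπ, Measure.map_add _ _ measurable_snd, map_measure_finset_sum J main measurable_snd,
      Finset.sum_congr rfl hmapsnd_main, hmap_left_μ]
    exact hdecompμ
  have hπprob : IsProbabilityMeasure π := by
    constructor
    have huniv : π Set.univ = (π.map Prod.fst) Set.univ := by
      rw [Measure.map_apply measurable_fst MeasurableSet.univ, Set.preimage_univ]
    rw [huniv, hfst, measure_univ]
  set C : ℝ≥0∞ := ENNReal.ofReal (((d+1) * ε2) ^ p) with hC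
  have hGle : ∀ i ∈ J, ∀ q ∈ (As i) ×ˢ (As i),
      ENNReal.ofReal (dPmet p q.1 q.2 ^ p) ≤ C := by
    intro i _ q hq
    apply ENNReal.ofReal_le_ofReal
    apply Real.rpow_le_rpow (dPmet_nonneg _ _) ?_ (hp0 hp).le
    calc dPmet p q.1 q.2 ≤ (d+1) * dist q.1 q.2 := dPmet_le_dist hp _ _
      _ ≤ (d+1) * ε2 := by
          apply mul_le_mul_of_nonneg_left ?_ (by positivity)
          exact le_trans (Metric.dist_le_diam_of_mem (hbound i) hq.1 hq.2) (hdiam i)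
  have hmain_cost : ∀ i ∈ J,
      ∫⁻ q, ENNReal.ofReal (dPmet p q.1 q.2 ^ p) ∂(main i) ≤ C * ci i := by
    intro i hi
    rw [hmain]
    rw [lintegral_smul_measure, Measure.prod_restrict]
    have hstep : ∫⁻ q in (As i) ×ˢ (As i), ENNReal.ofReal (dPmet p q.1 q.2 ^ p) ∂(ν.prod μ)
        ≤ C * (ν (As i) * μ (As i)) := by
      calc ∫⁻ q in (As i) ×ˢ (As i), ENNReal.ofReal (dPmet p q.1 q.2 ^ p) ∂(ν.prod μ)
          ≤ ∫⁻ _q in (As i) ×ˢ (As i), C ∂(ν.prod μ) :=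
            setLIntegral_mono measurable_const (hGle i hi)
        _ = C * (ν.prod μ) ((As i) ×ˢ (As i)) := setLIntegral_const _ _
        _ = C * (ν (As i) * μ (As i)) := by rw [Measure.prod_prod]
    calc ci i * (ν (As i) * μ (As i))⁻¹
          * ∫⁻ q in (As i) ×ˢ (As i), ENNReal.ofReal (dPmet p q.1 q.2 ^ p) ∂(ν.prod μ)
        ≤ ci i * (ν (As i) * μ (As i))⁻¹ * (C * (ν (As i) * μ (As i))) :=
          mul_le_mul_right hstep _
      _ = C * (ci i * ((ν (As i) * μ (As i))⁻¹ * (ν (As i) * μ (As i)))) := by ring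
      _ ≤ C * (ci i * 1) :=
          mul_le_mul_right (mul_le_mul_right (inv_mul_le_one' _) _) _
      _ = C * ci i := by rw [mul_one]
  have hIFν : ∫⁻ z, F z ∂Lν ≤ tν + ENNReal.ofReal R * θ := by
    calc ∫⁻ z, F z ∂Lν ≤ ∫⁻ z, (T z + ENNReal.ofReal R) ∂Lν := lintegral_mono hFleT
      _ = ∫⁻ z, T z ∂Lν + ENNReal.ofReal R * Lν Set.univ := by
          rw [lintegral_add_right _ measurable_const, lintegral_const]
      _ ≤ tν + ENNReal.ofReal R * θ := by
          apply add_le_add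
          · exact le_trans (lintegral_mono' hLν_le le_rfl) htν
          · rw [hLν_univ]
            exact mul_le_mul_right hδ_le_θ _
  have hIFμ : ∫⁻ z, F z ∂Lμ ≤ tμ + ENNReal.ofReal R * θ := by
    calc ∫⁻ z, F z ∂Lμ ≤ ∫⁻ z, (T z + ENNReal.ofReal R) ∂Lμ := lintegral_mono hFleT
      _ = ∫⁻ z, T z ∂Lμ + ENNReal.ofReal R * Lμ Set.univ := by
          rw [lintegral_add_right _ measurable_const, lintegral_const]
      _ ≤ tμ + ENNReal.ofReal R * θ := by
          apply add_le_add
          · exact le_trans (lintegral_mono' hLμ_le le_rfl) htμ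
          · rw [hLμ_univ]
            exact mul_le_mul_right hδ_le_θ _
  have hleft_cost : ∫⁻ q, ENNReal.ofReal (dPmet p q.1 q.2 ^ p) ∂(δ⁻¹ • (Lν.prod Lμ))
      ≤ 2 ^ p * (tν + tμ + 2 * ENNReal.ofReal R * θ) := by
    rw [lintegral_smul_measure]
    rcases eq_or_ne δ 0 with h0 | h0
    · have hLν0 : Lν = 0 := Measure.measure_univ_eq_zero.mp (by rw [hLν_univ, h0])
      rw [hLν0, Measure.zero_prod, lintegral_zero_measure, smul_zero]
      exact zero_le
    · have hptw : ∀ q : Zsp d × Zsp d, ENNReal.ofReal (dPmet p q.1 q.2 ^ p)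
          ≤ 2 ^ p * (F q.1 + F q.2) := by
        intro q
        calc ENNReal.ofReal (dPmet p q.1 q.2 ^ p)
            ≤ ENNReal.ofReal (2 ^ p * (f q.1 + f q.2)) :=
              ENNReal.ofReal_le_ofReal (dPmet_rpow_le_moment hp _ _)
          _ = 2 ^ p * (F q.1 + F q.2) := by
              rw [ENNReal.ofReal_mul (by positivity),
                ENNReal.ofReal_add (hfnonneg _) (hfnonneg _), ofReal_two_rpow hp]
      have hprod1 : ∫⁻ q : Zsp d × Zsp d, F q.1 ∂(Lν.prod Lμ)
          = (∫⁻ z, F z ∂Lν) * Lμ Set.univ := by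
        rw [lintegral_prod (fun q : Zsp d × Zsp d => F q.1)
          ((hFmeas.comp measurable_fst).aemeasurable)]
        trans (∫⁻ x, F x * Lμ Set.univ ∂Lν)
        · exact lintegral_congr fun x => lintegral_const (F x)
        · exact lintegral_mul_const _ hFmeas
      have hprod2 : ∫⁻ q : Zsp d × Zsp d, F q.2 ∂(Lν.prod Lμ)
          = (∫⁻ z, F z ∂Lμ) * Lν Set.univ := by
        rw [lintegral_prod (fun q : Zsp d × Zsp d => F q.2)
          ((hFmeas.comp measurable_snd).aemeasurable)]
        trans (∫⁻ _x : Zsp d, (∫⁻ z, F z ∂Lμ) ∂Lν)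
        · exact lintegral_congr fun x => rfl
        · rw [lintegral_const]
      have step1 : ∫⁻ q, ENNReal.ofReal (dPmet p q.1 q.2 ^ p) ∂(Lν.prod Lμ)
          ≤ 2 ^ p * (δ * ((∫⁻ z, F z ∂Lν) + (∫⁻ z, F z ∂Lμ))) := by
        calc ∫⁻ q, ENNReal.ofReal (dPmet p q.1 q.2 ^ p) ∂(Lν.prod Lμ)
            ≤ ∫⁻ q, 2 ^ p * (F q.1 + F q.2) ∂(Lν.prod Lμ) := lintegral_mono hptw
          _ = 2 ^ p * ∫⁻ q : Zsp d × Zsp d, (F q.1 + F q.2) ∂(Lν.prod Lμ) :=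
              lintegral_const_mul _ ((hFmeas.comp measurable_fst).add
                (hFmeas.comp measurable_snd))
          _ = 2 ^ p * ((∫⁻ z, F z ∂Lν) * Lμ Set.univ + (∫⁻ z, F z ∂Lμ) * Lν Set.univ) := by
              rw [lintegral_add_left (f := fun q : Zsp d × Zsp d => F q.1)
                (hFmeas.comp measurable_fst), hprod1, hprod2]
          _ = 2 ^ p * (δ * ((∫⁻ z, F z ∂Lν) + (∫⁻ z, F z ∂Lμ))) := by
              rw [hLν_univ, hLμ_univ]
              ring
      calc δ⁻¹ * ∫⁻ q, ENNReal.ofReal (dPmet p q.1 q.2 ^ p) ∂(Lν.prod Lμ)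
          ≤ δ⁻¹ * (2 ^ p * (δ * ((∫⁻ z, F z ∂Lν) + (∫⁻ z, F z ∂Lμ)))) :=
            mul_le_mul_right step1 _
        _ = (δ⁻¹ * δ) * (2 ^ p * ((∫⁻ z, F z ∂Lν) + (∫⁻ z, F z ∂Lμ))) := by ring
        _ = 2 ^ p * ((∫⁻ z, F z ∂Lν) + (∫⁻ z, F z ∂Lμ)) := by
            rw [ENNReal.inv_mul_cancel h0 hδ_ne_top, one_mul]
        _ ≤ 2 ^ p * ((tν + ENNReal.ofReal R * θ) + (tμ + ENNReal.ofReal R * θ)) :=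
            mul_le_mul_right (add_le_add hIFν hIFμ) _
        _ = 2 ^ p * (tν + tμ + 2 * ENNReal.ofReal R * θ) := by ring
  refine ⟨π, ⟨hπprob, hfst, hsnd⟩, ?_⟩
  rw [show eCostP p π = ∫⁻ q, ENNReal.ofReal (dPmet p q.1 q.2 ^ p) ∂π from rfl, hπ,
    lintegral_add_measure, lintegral_finset_sum_measure]
  apply add_le_add ?_ hleft_cost
  calc ∑ i ∈ J, ∫⁻ q, ENNReal.ofReal (dPmet p q.1 q.2 ^ p) ∂(main i)
      ≤ ∑ i ∈ J, C * ci i := Finset.sum_le_sum hmain_cost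
    _ = C * S := by rw [hS, Finset.mul_sum]
    _ ≤ C * 1 := mul_le_mul_right hS_le_one _
    _ = C := mul_one _


/-- Eventually there are couplings of `μs k` and `μ` with small `dPmet` cost. -/
lemma eventually_good_coupling (hp : 1 ≤ p) {μ : Measure (Zsp d)} {μs : ℕ → Measure (Zsp d)}
    (hμs : ∀ k, MemPp p (μs k)) (hμ : MemPp p μ) (hconv : WeakConvPp p μs μ)
    {ε : ℝ} (hε : 0 < ε) :
    ∀ᶠ k in atTop, ∃ π : Measure (Zsp d × Zsp d), IsCoupling π (μs k) μ ∧
      ∫ z, dPmet p z.1 z.2 ^ p ∂π ≤ ε := by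
  classical
  haveI hμP : IsProbabilityMeasure μ := hμ.1
  set f : Zsp d → ℝ := fun z => dPmet p 0 z ^ p with hfdef
  have hfcont : Continuous f := continuous_dPmet_rpow hp 0
  have hfnonneg : ∀ z, 0 ≤ f z := fun z => Real.rpow_nonneg (dPmet_nonneg _ _) _
  have hfint : Integrable f μ := hμ.2 0
  have hfint' : ∀ k, Integrable f (μs k) := fun k => (hμs k).2 0
  have hminint : ∀ (m : Measure (Zsp d)), Integrable f m →
      ∀ R : ℝ, 0 ≤ R → Integrable (fun z => min (f z) R) m := by
    intro m hm R hR
    refine hm.mono ((hfcont.min continuous_const).aestronglyMeasurable) ?_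
    filter_upwards with z
    rw [Real.norm_eq_abs, Real.norm_eq_abs, abs_of_nonneg (le_min (hfnonneg z) hR),
      abs_of_nonneg (hfnonneg z)]
    exact min_le_left _ _
  -- the constant from the final arithmetic
  set ε' : ℝ := ε / (1 + 6 * 2 ^ p) with hε'def
  have h2p : (0:ℝ) < 2 ^ p := Real.rpow_pos_of_pos (by norm_num) _
  have hε' : 0 < ε' := by
    apply div_pos hε
    positivity
  -- Step 1 : choose the truncation level R
  have hmono_cv : Tendsto (fun n : ℕ => ∫ z, min (f z) n ∂μ) atTop (𝓝 (∫ z, f z ∂μ)) := by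
    apply integral_tendsto_of_tendsto_of_monotone
      (fun n => hminint μ hfint n (Nat.cast_nonneg n)) hfint
    · filter_upwards with x
      intro a b hab
      exact min_le_min le_rfl (Nat.cast_le.mpr hab)
    · filter_upwards with x
      have : ∀ n : ℕ, n ≥ ⌈f x⌉₊ → min (f x) n = f x := by
        intro n hn
        exact min_eq_left (le_trans (Nat.le_ceil _) (Nat.cast_le.mpr hn))
      exact tendsto_atTop_of_eventually_const this
  obtain ⟨n0, hn0'⟩ := Metric.tendsto_atTop.mp hmono_cv ε' hε'
  have hn0 : |∫ z, min (f z) (n0:ℝ) ∂μ - ∫ z, f z ∂μ| < ε' := by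
    have := hn0' n0 le_rfl
    rwa [Real.dist_eq] at this
  set R : ℝ := (n0 : ℝ) with hRdef
  have hR : 0 ≤ R := Nat.cast_nonneg n0
  have htailμ : ∫ z, (f z - min (f z) R) ∂μ ≤ ε' := by
    rw [integral_sub hfint (hminint μ hfint R hR)]
    rw [abs_lt] at hn0
    linarith [hn0.1]
  -- Step 2 : tails along the sequence
  set φR : BoundedContinuousFunction (Zsp d) ℝ :=
    BoundedContinuousFunction.ofNormedAddCommGroup (fun z => min (f z) R)
      (hfcont.min continuous_const) R (fun z => by
        rw [Real.norm_eq_abs, abs_of_nonneg (le_min (hfnonneg z) hR)]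
        exact min_le_right _ _) with hφR
  have hφRcoe : ∀ z, φR z = min (f z) R := fun z => rfl
  have htails : Tendsto (fun k => ∫ z, (f z - min (f z) R) ∂μs k) atTop
      (𝓝 (∫ z, (f z - min (f z) R) ∂μ)) := by
    have h1 := hconv.2 0
    have h2 := hconv.1 φR
    simp only [show ⇑φR = fun z => min (f z) R from rfl] at h2
    have h3 : ∀ (m : Measure (Zsp d)), Integrable f m →
        ∫ z, (f z - min (f z) R) ∂m = ∫ z, f z ∂m - ∫ z, min (f z) R ∂m := by
      intro m hm
      exact integral_sub hm (hminint m hm R hR)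
    rw [h3 μ hfint]
    have : (fun k => ∫ z, (f z - min (f z) R) ∂μs k)
        = fun k => ∫ z, f z ∂μs k - ∫ z, min (f z) R ∂μs k := by
      funext k
      exact h3 (μs k) (hfint' k)
    rw [this]
    exact h1.sub h2
  have htails_ev : ∀ᶠ k in atTop, ∫ z, (f z - min (f z) R) ∂μs k ≤ 2 * ε' := by
    have := htails.eventually (eventually_le_nhds (show ∫ z, (f z - min (f z) R) ∂μ < 2 * ε' by
      linarith))
    exact this
  -- Step 3 : the partition
  set ε2 : ℝ := (ε') ^ (1/p) / (d+1) with hε2def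
  have hε2 : 0 < ε2 := by
    apply div_pos (Real.rpow_pos_of_pos hε' _)
    positivity
  obtain ⟨As, hmeasA, hboundA, hdiamA, hcoverA, hdisjA, hfrontA⟩ := exists_partition μ hε2
  -- Step 4 : a finite family capturing most of the mass
  set η : ℝ := ε' / (R + 1) with hηdef
  have hη : 0 < η := div_pos hε' (by linarith)
  set θ : ℝ≥0∞ := ENNReal.ofReal η with hθdef
  have hθ0 : θ ≠ 0 := (ENNReal.ofReal_pos.mpr hη).ne'
  have hcover_mono : Monotone (fun N : ℕ => ⋃ i ∈ Finset.range N, As i) := by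
    intro a b hab
    apply Set.biUnion_subset_biUnion_left
    intro i hi
    exact Finset.mem_range.mpr (lt_of_lt_of_le (Finset.mem_range.mp hi) hab)
  have hcover_total : (⋃ N : ℕ, ⋃ i ∈ Finset.range N, As i) = Set.univ := by
    rw [← hcoverA]
    apply Set.Subset.antisymm
    · exact Set.iUnion_subset fun N => Set.iUnion₂_subset fun i _ => Set.subset_iUnion As i
    · intro z hz
      obtain ⟨i, hi⟩ := Set.mem_iUnion.mp hz
      exact Set.mem_iUnion.mpr ⟨i+1, Set.mem_biUnion (Finset.mem_range.mpr (by omega)) hi⟩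
  have hmeascv : Tendsto (fun N : ℕ => μ (⋃ i ∈ Finset.range N, As i)) atTop (𝓝 1) := by
    have := tendsto_measure_iUnion_atTop (μ := μ) hcover_mono
    rw [show (⋃ N : ℕ, ⋃ i ∈ Finset.range N, As i) = Set.univ from hcover_total] at this
    rw [measure_univ] at this
    exact this
  have hhalfθ : (1:ℝ≥0∞) - θ/2 < 1 :=
    ENNReal.sub_lt_self ENNReal.one_ne_top one_ne_zero (by simp [hθ0])
  obtain ⟨N, hN⟩ := (hmeascv.eventually (eventually_gt_nhds hhalfθ)).exists
  set J : Finset ℕ := Finset.range N with hJdef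
  set U : Set (Zsp d) := ⋃ i ∈ J, As i with hUdef
  -- Step 5 : convergence of masses on the partition pieces
  set P : ProbabilityMeasure (Zsp d) := ⟨μ, hμ.1⟩ with hP
  set Ps : ℕ → ProbabilityMeasure (Zsp d) := fun k => ⟨μs k, (hμs k).1⟩ with hPs
  have hPs_cv : Tendsto Ps atTop (𝓝 P) := by
    apply ProbabilityMeasure.tendsto_iff_forall_integral_tendsto.mpr
    intro g
    exact hconv.1 g
  have hmass_cv : ∀ i, Tendsto (fun k => μs k (As i)) atTop (𝓝 (μ (As i))) := by
    intro i
    have hfr0 : P (frontier (As i)) = 0 := by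
      simp only [hP, ProbabilityMeasure.coeFn_def]
      show (μ (frontier (As i))).toNNReal = 0
      rw [hfrontA i]
      simp
    have h1 := ProbabilityMeasure.tendsto_measure_of_null_frontier_of_tendsto hPs_cv hfr0
    have h2 := (ENNReal.tendsto_coe (f := atTop)).mpr h1
    simp only [ProbabilityMeasure.ennreal_coeFn_eq_coeFn_toMeasure] at h2
    exact h2
  have hsum_cv : Tendsto (fun k => ∑ i ∈ J, min (μs k (As i)) (μ (As i))) atTop
      (𝓝 (∑ i ∈ J, min (μ (As i)) (μ (As i)))) := by
    apply tendsto_finset_sum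
    intro i _
    exact (hmass_cv i).min tendsto_const_nhds
  have hsum_limit : (1:ℝ≥0∞) - θ < ∑ i ∈ J, min (μ (As i)) (μ (As i)) := by
    have heq : ∑ i ∈ J, min (μ (As i)) (μ (As i)) = μ U := by
      rw [hUdef, measure_biUnion_finset (fun i _ j _ hij => hdisjA hij) (fun i _ => hmeasA i)]
      exact Finset.sum_congr rfl fun i _ => min_self _
    rw [heq]
    refine lt_of_le_of_lt ?_ hN
    apply tsub_le_tsub_left
    exact ENNReal.half_le_self
  have hmass_ev : ∀ᶠ k in atTop,
      (1:ℝ≥0∞) - θ ≤ ∑ i ∈ J, min (μs k (As i)) (μ (As i)) := by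
    filter_upwards [hsum_cv.eventually (eventually_gt_nhds hsum_limit)] with k hk
    exact hk.le
  -- Step 6 : conclude
  filter_upwards [htails_ev, hmass_ev] with k htailk hmassk
  haveI : IsProbabilityMeasure (μs k) := (hμs k).1
  have htail_lint : ∀ (m : Measure (Zsp d)), Integrable f m → ∀ {c : ℝ}, 0 ≤ c →
      (∫ z, (f z - min (f z) R) ∂m ≤ c) →
      ∫⁻ z, ENNReal.ofReal (f z - min (f z) R) ∂m ≤ ENNReal.ofReal c := by
    intro m hm c hc hint
    have hnn : 0 ≤ᵐ[m] fun z => f z - min (f z) R := by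
      filter_upwards with z
      simp only [Pi.zero_apply]
      have := min_le_left (f z) R
      linarith
    have heq := integral_eq_lintegral_of_nonneg_ae hnn
      ((hfcont.sub (hfcont.min continuous_const)).aestronglyMeasurable)
    have hfin : ∫⁻ z, ENNReal.ofReal (f z - min (f z) R) ∂m ≠ ⊤ := by
      apply ne_of_lt
      have hb : ∫⁻ z, ENNReal.ofReal (f z - min (f z) R) ∂m
          ≤ ∫⁻ z, ENNReal.ofReal (f z) ∂m := by
        apply lintegral_mono
        intro z
        apply ENNReal.ofReal_le_ofReal
        have := le_min (hfnonneg z) hR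
        linarith
      refine lt_of_le_of_lt hb ?_
      have := hm.hasFiniteIntegral
      rwa [hasFiniteIntegral_iff_ofReal (Eventually.of_forall hfnonneg)] at this
    rw [ENNReal.le_ofReal_iff_toReal_le hfin hc, ← heq]
    exact hint
  have htν' := htail_lint (μs k) (hfint' k) (by linarith : (0:ℝ) ≤ 2 * ε') htailk
  have htμ' := htail_lint μ hfint hε'.le htailμ
  obtain ⟨π, hπc, hπcost⟩ := coupling_construction hp (hμs k).1 hμP As hmeasA hboundA
    hdisjA J hε2 hdiamA hmassk hR htν' htμ'
  refine ⟨π, hπc, ?_⟩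
  rw [costP_eq_toReal hp π]
  have hB : eCostP p π ≤ ENNReal.ofReal ε := by
    refine le_trans hπcost ?_
    have e2 : (((d:ℝ)+1) * ε2) ^ p = ε' := by
      have e1 : ((d:ℝ)+1) * ε2 = ε' ^ (1/p) := by
        rw [hε2def]
        field_simp
      rw [e1, ← Real.rpow_mul hε'.le, one_div, inv_mul_cancel₀ (hp0 hp).ne', Real.rpow_one]
    have hRη : 2 * R * η ≤ 2 * ε' := by
      rw [hηdef]
      rw [show 2 * R * (ε' / (R+1)) = (2 * R * ε') / (R + 1) by ring]
      rw [div_le_iff₀ (by linarith)]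
      nlinarith
    have hfinal : ε' * (1 + 6 * 2 ^ p) = ε := by
      rw [hε'def]
      field_simp
    rw [e2, hθdef,
      show (2:ℝ≥0∞) * ENNReal.ofReal R * ENNReal.ofReal η = ENNReal.ofReal (2*R*η) by
        rw [← ENNReal.ofReal_ofNat 2, ← ENNReal.ofReal_mul (by norm_num),
          ← ENNReal.ofReal_mul (by positivity)],
      ← ENNReal.ofReal_add (by positivity) (by positivity),
      ← ENNReal.ofReal_add (by positivity) (by positivity),
      ← ofReal_two_rpow hp,
      ← ENNReal.ofReal_mul (by positivity),
      ← ENNReal.ofReal_add (by positivity) (by positivity)]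
    apply ENNReal.ofReal_le_ofReal
    nlinarith
  calc (eCostP p π).toReal ≤ (ENNReal.ofReal ε).toReal :=
        ENNReal.toReal_mono ENNReal.ofReal_ne_top hB
    _ = ε := ENNReal.toReal_ofReal hε.le

end PartD

section PartE

lemma le_rpow_add_of_forall (hp : 1 ≤ p) {x I c : ℝ} (hI : 0 ≤ I)
    (h : ∀ δ : ℝ, 0 < δ → x ≤ (I + δ) ^ (1/p) + c) : x ≤ I ^ (1/p) + c := by
  have h1 : Tendsto (fun n : ℕ => I + 1/(n+1:ℝ)) atTop (𝓝 I) := by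
    have h0 := tendsto_one_div_add_atTop_nhds_zero_nat (𝕜 := ℝ)
    simpa using (tendsto_const_nhds (x := I) (f := atTop)).add h0
  have htend : Tendsto (fun n : ℕ => (I + 1/(n+1:ℝ)) ^ (1/p) + c) atTop (𝓝 (I ^ (1/p) + c)) := by
    apply Tendsto.add_const
    exact ((Real.continuousAt_rpow_const I (1/p) (Or.inr (by positivity))).tendsto).comp h1
  refine ge_of_tendsto htend ?_
  filter_upwards with n
  exact h _ (by positivity)

lemma integral_dpw_le_dPmet (hp : 1 ≤ p) (hw0 : 0 ≤ w) (hw1 : w ≤ 1)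
    {π : Measure (Zsp d × Zsp d)} {α β : Measure (Zsp d)}
    (hπ : IsCoupling π α β) (hα : MemPp p α) (hβ : MemPp p β) :
    ∫ z, dpw p w z.1 z.2 ^ p ∂π ≤ ∫ z, dPmet p z.1 z.2 ^ p ∂π := by
  apply integral_mono (integrable_dpw_cost hp hw0 hw1 hπ hα hβ)
    (integrable_dPmet_cost hp hπ hα hβ)
  intro q
  exact Real.rpow_le_rpow (dpw_nonneg hw0 hw1 _ _) (dpw_le_dPmet hp hw0 hw1 _ _) (hp0 hp).le

lemma costP_nonneg (π : Measure (Zsp d × Zsp d)) :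
    0 ≤ ∫ z, dPmet p z.1 z.2 ^ p ∂π :=
  integral_nonneg fun q => Real.rpow_nonneg (dPmet_nonneg _ _) _

lemma costP_swap (hp : 1 ≤ p) {π : Measure (Zsp d × Zsp d)} :
    ∫ z, dPmet p z.1 z.2 ^ p ∂(π.map Prod.swap) = ∫ z, dPmet p z.1 z.2 ^ p ∂π := by
  rw [integral_map measurable_swap.aemeasurable
    (continuous_dPmet_rpow_pair hp).aestronglyMeasurable]
  simp only [Prod.fst_swap, Prod.snd_swap]
  congr 1
  funext q
  rw [dPmet_symm]

/-- One-sided comparison of `Wpw` via approximate couplings. -/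
lemma Wpw_le_Wpw_add (hp : 1 ≤ p) (hw0 : 0 ≤ w) (hw1 : w ≤ 1)
    {a b a' b' : Measure (Zsp d)} (ha : MemPp p a) (hb : MemPp p b)
    (ha' : MemPp p a') (hb' : MemPp p b')
    {ρ σ : Measure (Zsp d × Zsp d)} (hρ : IsCoupling ρ a' a) (hσ : IsCoupling σ b' b) :
    Wpw p w a' b' ≤ Wpw p w a b
      + ((∫ z, dPmet p z.1 z.2 ^ p ∂ρ) ^ (1/p) + (∫ z, dPmet p z.1 z.2 ^ p ∂σ) ^ (1/p)) := by
  set c : ℝ := (∫ z, dPmet p z.1 z.2 ^ p ∂ρ) ^ (1/p) + (∫ z, dPmet p z.1 z.2 ^ p ∂σ) ^ (1/p)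
    with hc
  rw [Wpw_eq (α := a) (β := b)]
  apply le_rpow_add_of_forall hp (sInf_cSet_nonneg hp hw0 hw1)
  intro δ hδ
  obtain ⟨r, ⟨π, hπc, hπr⟩, hrlt⟩ := Real.lt_sInf_add_pos (cSet_nonempty ha.1 hb.1) hδ
  -- glue ρ with π
  obtain ⟨τ1, hτ1c, hτ1le⟩ := glue hp hw0 hw1 ha' ha hb hρ hπc
  -- glue τ1 with swap of σ
  have hσswap : IsCoupling (σ.map Prod.swap) b b' := isCoupling_swap hσ
  obtain ⟨τ2, hτ2c, hτ2le⟩ := glue hp hw0 hw1 ha' hb hb' hτ1c hσswap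
  calc Wpw p w a' b' ≤ (∫ z, dpw p w z.1 z.2 ^ p ∂τ2) ^ (1/p) :=
        Wpw_le_of_coupling hp hw0 hw1 hτ2c
    _ ≤ ((∫ z, dpw p w z.1 z.2 ^ p ∂ρ) ^ (1/p) + (∫ z, dpw p w z.1 z.2 ^ p ∂π) ^ (1/p))
        + (∫ z, dpw p w z.1 z.2 ^ p ∂(σ.map Prod.swap)) ^ (1/p) :=
        le_trans hτ2le (add_le_add_left hτ1le _)
    _ ≤ ((∫ z, dPmet p z.1 z.2 ^ p ∂ρ) ^ (1/p) + (r) ^ (1/p))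
        + (∫ z, dPmet p z.1 z.2 ^ p ∂σ) ^ (1/p) := by
        apply add_le_add
        apply add_le_add
        · apply Real.rpow_le_rpow
            (integral_nonneg fun q => Real.rpow_nonneg (dpw_nonneg hw0 hw1 _ _) _)
            (integral_dpw_le_dPmet hp hw0 hw1 hρ ha' ha) (by positivity)
        · rw [hπr]
        · rw [cost_swap hp hw0 hw1]
          apply Real.rpow_le_rpow
            (integral_nonneg fun q => Real.rpow_nonneg (dpw_nonneg hw0 hw1 _ _) _)
            (integral_dpw_le_dPmet hp hw0 hw1 hσ hb' hb) (by positivity)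
    _ ≤ (sInf (cSet p w a b) + δ) ^ (1/p) + c := by
        rw [hc]
        have hr0 : 0 ≤ r := cSet_nonneg hp hw0 hw1 r ⟨π, hπc, hπr⟩
        have : r ^ (1/p) ≤ (sInf (cSet p w a b) + δ) ^ (1/p) :=
          Real.rpow_le_rpow hr0 hrlt.le (by positivity)
        linarith

/-- Uniform bound for `Wpw` over `w`. -/
lemma Wpw_le_B (hp : 1 ≤ p) (hw0 : 0 ≤ w) (hw1 : w ≤ 1)
    {a b : Measure (Zsp d)} (ha : MemPp p a) (hb : MemPp p b) :
    Wpw p w a b ≤ (∫ z, dPmet p z.1 z.2 ^ p ∂(a.prod b)) ^ (1/p) := by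
  refine le_trans (Wpw_le_of_coupling hp hw0 hw1 (isCoupling_prod ha.1 hb.1)) ?_
  apply Real.rpow_le_rpow
    (integral_nonneg fun q => Real.rpow_nonneg (dpw_nonneg hw0 hw1 _ _) _)
    (integral_dpw_le_dPmet hp hw0 hw1 (isCoupling_prod ha.1 hb.1) ha hb) (by positivity)

/-- The set appearing in `Dp`. -/
lemma dpSet_nonempty (hp : 1 ≤ p) (a b : Measure (Zsp d)) :
    {r : ℝ | ∃ w ∈ Set.Icc (0:ℝ) 1, r = Wpw p w a b}.Nonempty :=
  ⟨Wpw p 0 a b, 0, ⟨le_refl 0, zero_le_one⟩, rfl⟩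

lemma dpSet_bddAbove (hp : 1 ≤ p) {a b : Measure (Zsp d)} (ha : MemPp p a) (hb : MemPp p b) :
    BddAbove {r : ℝ | ∃ w ∈ Set.Icc (0:ℝ) 1, r = Wpw p w a b} := by
  refine ⟨(∫ z, dPmet p z.1 z.2 ^ p ∂(a.prod b)) ^ (1/p), ?_⟩
  rintro r ⟨w, ⟨hw0, hw1⟩, rfl⟩
  exact Wpw_le_B hp hw0 hw1 ha hb

lemma Dp_nonneg (hp : 1 ≤ p) {a b : Measure (Zsp d)} (ha : MemPp p a) (hb : MemPp p b) :
    0 ≤ Dp p a b := by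
  refine le_trans (Wpw_nonneg (α := a) (β := b) (w := 0) hp le_rfl zero_le_one) ?_
  exact le_csSup (dpSet_bddAbove hp ha hb) ⟨0, ⟨le_refl 0, zero_le_one⟩, rfl⟩

/-- Two-sided comparison of `Dp` via approximate couplings. -/
lemma abs_Dp_diff_le (hp : 1 ≤ p) {a b a' b' : Measure (Zsp d)}
    (ha : MemPp p a) (hb : MemPp p b) (ha' : MemPp p a') (hb' : MemPp p b')
    {ρ σ : Measure (Zsp d × Zsp d)} (hρ : IsCoupling ρ a' a) (hσ : IsCoupling σ b' b) :
    |Dp p a' b' - Dp p a b|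
      ≤ (∫ z, dPmet p z.1 z.2 ^ p ∂ρ) ^ (1/p) + (∫ z, dPmet p z.1 z.2 ^ p ∂σ) ^ (1/p) := by
  set c : ℝ := (∫ z, dPmet p z.1 z.2 ^ p ∂ρ) ^ (1/p) + (∫ z, dPmet p z.1 z.2 ^ p ∂σ) ^ (1/p)
    with hcdef
  have hc0 : 0 ≤ c := by
    rw [hcdef]
    have h1 : (0:ℝ) ≤ (∫ z, dPmet p z.1 z.2 ^ p ∂ρ) ^ (1/p) :=
      Real.rpow_nonneg (costP_nonneg _) _
    have h2 : (0:ℝ) ≤ (∫ z, dPmet p z.1 z.2 ^ p ∂σ) ^ (1/p) :=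
      Real.rpow_nonneg (costP_nonneg _) _
    linarith
  rw [abs_sub_le_iff]
  constructor
  · rw [sub_le_iff_le_add]
    apply Real.sSup_le ?_ (by linarith [Dp_nonneg hp ha hb])
    rintro r ⟨w, ⟨hw0, hw1⟩, rfl⟩
    have h1 := Wpw_le_Wpw_add hp hw0 hw1 ha hb ha' hb' hρ hσ
    have h2 : Wpw p w a b ≤ Dp p a b :=
      le_csSup (dpSet_bddAbove hp ha hb) ⟨w, ⟨hw0, hw1⟩, rfl⟩
    rw [← hcdef] at h1
    linarith
  · rw [sub_le_iff_le_add]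
    apply Real.sSup_le ?_ (by linarith [Dp_nonneg hp ha' hb'])
    rintro r ⟨w, ⟨hw0, hw1⟩, rfl⟩
    have hρ' : IsCoupling (ρ.map Prod.swap) a a' := isCoupling_swap hρ
    have hσ' : IsCoupling (σ.map Prod.swap) b b' := isCoupling_swap hσ
    have h1 := Wpw_le_Wpw_add hp hw0 hw1 ha' hb' ha hb hρ' hσ'
    rw [costP_swap hp, costP_swap hp, ← hcdef] at h1
    have h2 : Wpw p w a' b' ≤ Dp p a' b' :=
      le_csSup (dpSet_bddAbove hp ha' hb') ⟨w, ⟨hw0, hw1⟩, rfl⟩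
    linarith

end PartE

end TOT

/-- `D_p` is jointly continuous w.r.t. weak convergence in `P_p(ℝ^{d+1})`. -/
theorem Dp_continuous {d : ℕ} (hd : 1 ≤ d) (p : ℝ) (hp : 1 ≤ p)
    (μs νs : ℕ → Measure (Zsp d)) (hμs : ∀ k, MemPp p (μs k)) (hνs : ∀ k, MemPp p (νs k))
    (μ ν : Measure (Zsp d)) (hμ : MemPp p μ) (hν : MemPp p ν)
    (hμconv : WeakConvPp p μs μ) (hνconv : WeakConvPp p νs ν) :
    Tendsto (fun k => Dp p (μs k) (νs k)) atTop (𝓝 (Dp p μ ν)) := by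
  rw [Metric.tendsto_atTop]
  intro ε hε
  have hε4 : 0 < (ε/4) ^ p := Real.rpow_pos_of_pos (by linarith) _
  have h1 := TOT.eventually_good_coupling hp hμs hμ hμconv hε4
  have h2 := TOT.eventually_good_coupling hp hνs hν hνconv hε4
  obtain ⟨N, hN⟩ := Filter.eventually_atTop.mp (h1.and h2)
  refine ⟨N, ?_⟩
  intro k hk
  obtain ⟨⟨ρ, hρc, hρcost⟩, ⟨σ, hσc, hσcost⟩⟩ := hN k hk
  rw [Real.dist_eq]
  have habs := TOT.abs_Dp_diff_le hp hμ hν (hμs k) (hνs k) hρc hσc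
  have hkey : ∀ {π : Measure (Zsp d × Zsp d)}, (∫ z, dPmet p z.1 z.2 ^ p ∂π ≤ (ε/4) ^ p) →
      (∫ z, dPmet p z.1 z.2 ^ p ∂π) ^ (1/p) ≤ ε/4 := by
    intro π hπ
    calc (∫ z, dPmet p z.1 z.2 ^ p ∂π) ^ (1/p) ≤ ((ε/4) ^ p) ^ (1/p) :=
          Real.rpow_le_rpow (TOT.costP_nonneg _) hπ (by positivity)
      _ = ε/4 := by
          rw [← Real.rpow_mul (by linarith), mul_one_div, div_self (TOT.hp0 hp).ne',
            Real.rpow_one]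
  have hb1 := hkey hρcost
  have hb2 := hkey hσcost
  calc |Dp p (μs k) (νs k) - Dp p μ ν|
      ≤ (∫ z, dPmet p z.1 z.2 ^ p ∂ρ) ^ (1/p) + (∫ z, dPmet p z.1 z.2 ^ p ∂σ) ^ (1/p) := habs
    _ < ε := by linarith
end
end
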